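/- arXiv:2209.00081 — 7 statements merged into one kernel-verified Lean document; each statement's English description precedes it below -/
import Mathlib

section
/- Let C = ⋃_{i=1}^{s} C_i with C_i = ⋂_{j=1}^{r_i} {x ∈ ℝⁿ : b_{ij}(x) ≥ 0} be a practical semi-algebraic set. Let x ∈ C, let S = {i : x ∈ C_i}, and for i ∈ S let T_i = {j ∈ {1,…,r_i} : b_{ij}(x) = 0}; assume each T_i with i ∈ S is nonempty. Then T_C(x) = ⋃_{i∈S} ⋂_{j∈T_i} {z ∈ ℝⁿ : ∇b_{ij}(x)·z ≥ 0}. -/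
/-!
Bouligand's liminf tangent cone agrees, at points of the closure, with Mathlib's sequential
`posTangentConeAt`: the directions `lim c n • d n` with `c n ≥ 0`, `d n → 0`, `x + d n ∈ C`.
A sequence in a finite union has a subsequence in one piece, so the tangent cone of `C` is the
union of the tangent cones of the closed pieces `C i` through `x`. On such a piece `x` minimizes
every active `b i j`, so tangent directions satisfy the linearized active constraints.
Conversely, if `z` satisfies them and `z₀` is the direction given by practicality, all
constraints stay nonnegative on `x + τ • (z + ε • z₀)` for small `τ > 0`, so `z + ε • z₀` is a
tangent direction, and so is its limit `z` since tangent cones are closed.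
-/

open Filter MvPolynomial

/-- The Euclidean-distance realization of a point of `ℝⁿ`. -/
noncomputable def toEuc {n : ℕ} (x : Fin n → ℝ) : EuclideanSpace ℝ (Fin n) :=
  (EuclideanSpace.equiv (Fin n) ℝ).symm x

/-- The Bouligand tangent cone to `D ⊆ ℝⁿ` at `x`, with Euclidean distance. -/
noncomputable def tangentConeAt' {n : ℕ} (D : Set (Fin n → ℝ)) (x : Fin n → ℝ) :
    Set (Fin n → ℝ) :=
  {z | Filter.liminf (fun τ : ℝ => Metric.infDist (toEuc (x + τ • z)) (toEuc '' D) / τ)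
        (nhdsWithin 0 (Set.Ioi (0 : ℝ))) = 0}

open Set Metric Topology

namespace MvPolynomial

variable {n : ℕ}

noncomputable def fderivEval (p : MvPolynomial (Fin n) ℝ) (x : Fin n → ℝ) :
    (Fin n → ℝ) →L[ℝ] ℝ :=
  ∑ k, eval x (pderiv k p) • ContinuousLinearMap.proj k

theorem fderivEval_apply (p : MvPolynomial (Fin n) ℝ) (x z : Fin n → ℝ) :
    fderivEval p x z = ∑ k, eval x (pderiv k p) * z k := by
  simp [fderivEval]

theorem hasFDerivAt_eval (p : MvPolynomial (Fin n) ℝ) (x : Fin n → ℝ) :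
    HasFDerivAt (fun y ↦ eval y p) (fderivEval p x) x := by
  induction p using MvPolynomial.induction_on with
  | C a =>
    simp only [eval_C]
    refine (hasFDerivAt_const a x).congr_fderiv ?_
    ext z; simp [fderivEval_apply]
  | add p q hp hq =>
    simp only [map_add]
    refine (hp.add hq).congr_fderiv ?_
    ext z; simp [fderivEval_apply, Finset.sum_add_distrib, add_mul]
  | mul_X p i hp =>
    simp only [map_mul, eval_X]
    refine (hp.mul (ContinuousLinearMap.proj i).hasFDerivAt).congr_fderiv ?_
    ext z
    simp [fderivEval_apply, Pi.single_apply, add_mul, Finset.sum_add_distrib, apply_ite (eval x),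
      ite_mul, Finset.mul_sum, mul_assoc]

end MvPolynomial

section TopologicalVectorSpace

variable {R E : Type*} [AddCommGroup E] [SMul R E] [TopologicalSpace E]

theorem tangentConeAt_iUnion {ι : Type*} [Finite ι] (s : ι → Set E) (x : E) :
    tangentConeAt R (⋃ i, s i) x = ⋃ i, tangentConeAt R (s i) x := by
  refine Subset.antisymm (fun z hz ↦ ?_)
    (iUnion_subset fun i ↦ tangentConeAt_mono (subset_iUnion s i))
  obtain ⟨α, l, hl, c, d, hd₀, hds, hcd⟩ := exists_fun_of_mem_tangentConeAt hz
  simp only [mem_iUnion] at hds ⊢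
  obtain ⟨i, hi⟩ := frequently_exists.1 hds.frequently
  exact ⟨i, mem_tangentConeAt_of_frequently l c d hd₀ hi hcd⟩

theorem isClosed_tangentConeAt (s : Set E) (x : E) : IsClosed (tangentConeAt R s x) := by
  rw [tangentConeAt_eq_biInter_closure]
  exact isClosed_biInter fun _ _ ↦ isClosed_closure

end TopologicalVectorSpace

section NormedSpace

variable {E F : Type*} [NormedAddCommGroup E] [NormedSpace ℝ E]
  [NormedAddCommGroup F] [NormedSpace ℝ F]

theorem ContinuousLinearMap.mapsTo_posTangentConeAt (f : E →L[ℝ] F) (s : Set E) (x : E) :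
    MapsTo f (posTangentConeAt s x) (posTangentConeAt (f '' s) (f x)) := by
  intro z hz
  obtain ⟨α, l, hl, c, d, hd₀, hds, hcd⟩ := exists_fun_of_mem_tangentConeAt hz
  refine mem_tangentConeAt_of_seq l c (f ∘ d) ?_ ?_ ?_
  · simpa using (f.continuous.tendsto 0).comp hd₀
  · filter_upwards [hds] with a ha
    exact ⟨_, ha, by simp⟩
  · simpa [Function.comp_def, map_smul_of_tower] using (f.continuous.tendsto z).comp hcd

theorem ContinuousLinearEquiv.mem_posTangentConeAt_image_iff (e : E ≃L[ℝ] F) {s : Set E}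
    {x z : E} : e z ∈ posTangentConeAt (e '' s) (e x) ↔ z ∈ posTangentConeAt s x := by
  refine ⟨fun h ↦ ?_, fun h ↦ (e : E →L[ℝ] F).mapsTo_posTangentConeAt s x h⟩
  simpa [image_image] using (e.symm : F →L[ℝ] E).mapsTo_posTangentConeAt _ _ h

theorem infDist_add_smul_le {s : Set E} {x : E} (hx : x ∈ closure s) (z : E) {τ : ℝ}
    (hτ : 0 ≤ τ) : infDist (x + τ • z) s ≤ τ * ‖z‖ := by
  simpa [infDist_zero_of_mem_closure hx, dist_eq_norm, norm_smul, abs_of_nonneg hτ]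
    using infDist_le_infDist_add_dist (x := x + τ • z) (y := x) (s := s)

theorem frequently_infDist_div_lt_of_mem_posTangentConeAt {s : Set E} {x z : E}
    (hz : z ∈ posTangentConeAt s x) {ε : ℝ} (hε : 0 < ε) :
    ∃ᶠ τ in 𝓝[>] (0 : ℝ), infDist (x + τ • z) s / τ < ε := by
  rcases eq_or_ne z 0 with rfl | hz₀
  · have hx : infDist x s = 0 := infDist_zero_of_mem_closure
      (mem_closure_of_nonempty_tangentConeAt ⟨0, hz⟩)
    exact Eventually.frequently (.of_forall fun τ ↦ by simpa [hx] using hε)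
  obtain ⟨α, l, hl, c, d, hd₀, hds, hcd⟩ := exists_fun_of_mem_tangentConeAt hz
  replace hcd : Tendsto (fun a ↦ (c a : ℝ) • d a) l (𝓝 z) := by simpa [NNReal.smul_def] using hcd
  have hcd₀ : ∀ᶠ a in l, (c a : ℝ) ≠ 0 ∧ d a ≠ 0 :=
    (hcd.eventually_ne hz₀).mono fun a ↦ smul_ne_zero_iff.1
  -- `(c a)⁻¹ = ‖d a‖ / ‖c a • d a‖ → 0 / ‖z‖`
  have hτ : Tendsto (fun a ↦ (c a : ℝ)⁻¹) l (𝓝[>] 0) := by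
    refine tendsto_nhdsWithin_iff.2 ⟨?_, hcd₀.mono fun a ha ↦ ?_⟩
    · have := hd₀.norm.div hcd.norm (norm_ne_zero_iff.2 hz₀)
      rw [norm_zero, zero_div] at this
      refine this.congr' (hcd₀.mono fun a ha ↦ ?_)
      rw [Pi.div_apply, norm_smul, div_mul_cancel_right₀ (norm_ne_zero_iff.2 ha.2)]
      simp
    · exact inv_pos.2 (lt_of_le_of_ne (c a).2 (Ne.symm ha.1))
  refine hτ.frequently (Eventually.frequently ?_)
  filter_upwards [hds, hcd₀, hcd.eventually (ball_mem_nhds z hε)] with a hxd hca hzd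
  set τ := (c a : ℝ)⁻¹
  have hτ₀ : 0 < τ := inv_pos.2 (lt_of_le_of_ne (c a).2 (Ne.symm hca.1))
  have hd : dist (τ • z) (d a) = τ * dist z ((c a : ℝ) • d a) := by
    conv_lhs => rw [← one_smul ℝ (d a), ← inv_mul_cancel₀ hca.1, ← smul_smul]
    rw [dist_smul₀, Real.norm_of_nonneg hτ₀.le]
  rw [div_lt_iff₀ hτ₀]
  calc infDist (x + τ • z) s ≤ dist (x + τ • z) (x + d a) := infDist_le_dist_of_mem hxd
    _ = τ * dist ((c a : ℝ) • d a) z := by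
      rw [dist_add_left, hd, dist_comm]
    _ < ε * τ := by rw [mul_comm]; exact mul_lt_mul_of_pos_right hzd hτ₀

theorem mem_posTangentConeAt_of_frequently_infDist_div_lt {s : Set E} {x z : E}
    (hx : x ∈ closure s) (h : ∀ ε > 0, ∃ᶠ τ in 𝓝[>] (0 : ℝ), infDist (x + τ • z) s / τ < ε) :
    z ∈ posTangentConeAt s x := by
  have hne : s.Nonempty := closure_nonempty_iff.1 ⟨x, hx⟩
  have hseq : ∀ m : ℕ, ∃ τ ∈ Ioo (0 : ℝ) (1 / (m + 1)), ∃ y ∈ s,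
      dist (x + τ • z) y < τ * (1 / (m + 1)) := by
    intro m
    obtain ⟨τ, hlt, hτ⟩ :=
      ((h _ Nat.one_div_pos_of_nat).and_eventually (Ioo_mem_nhdsGT Nat.one_div_pos_of_nat)).exists
    obtain ⟨y, hy, hdist⟩ := (infDist_lt_iff hne).1 ((div_lt_iff₀' hτ.1).1 hlt)
    exact ⟨τ, hτ, y, hy, hdist⟩
  choose τ hτ y hy hdist using hseq
  have hτ₀ : Tendsto τ atTop (𝓝 0) :=
    tendsto_of_tendsto_of_tendsto_of_le_of_le tendsto_const_nhds
      tendsto_one_div_add_atTop_nhds_zero_nat (fun m ↦ (hτ m).1.le) fun m ↦ (hτ m).2.le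
  have hcd : Tendsto (fun m ↦ (τ m)⁻¹ • (y m - x)) atTop (𝓝 z) := by
    refine tendsto_iff_dist_tendsto_zero.2 <| squeeze_zero (fun _ ↦ dist_nonneg) (fun m ↦ ?_)
      tendsto_one_div_add_atTop_nhds_zero_nat
    have hτm := (hτ m).1
    calc dist ((τ m)⁻¹ • (y m - x)) z = (τ m)⁻¹ * dist (x + τ m • z) (y m) := by
          have : (τ m)⁻¹ • (y m - x) - z = (τ m)⁻¹ • (y m - (x + τ m • z)) := by
            simp only [smul_sub, smul_add, smul_smul, inv_mul_cancel₀ hτm.ne', one_smul]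
            abel
          rw [dist_eq_norm, this, norm_smul, Real.norm_of_nonneg (inv_nonneg.2 hτm.le),
            ← dist_eq_norm, dist_comm]
      _ ≤ 1 / (m + 1) := by
          rw [inv_mul_le_iff₀ hτm]; exact (hdist m).le
  refine mem_tangentConeAt_of_seq atTop (fun m ↦ (τ m)⁻¹.toNNReal) (fun m ↦ y m - x) ?_
    (.of_forall fun m ↦ by simpa using hy m) ?_
  · have := hτ₀.smul hcd
    rw [zero_smul] at this
    refine this.congr fun m ↦ ?_
    rw [smul_smul, mul_inv_cancel₀ (hτ m).1.ne', one_smul]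
  · simpa [NNReal.smul_def, (hτ _).1.le] using hcd

theorem liminf_eq_zero_iff_frequently_lt {α : Type*} {l : Filter α} [l.NeBot] {f : α → ℝ}
    (h₀ : ∀ᶠ a in l, 0 ≤ f a) (hb : IsBoundedUnder (· ≤ ·) l f) :
    liminf f l = 0 ↔ ∀ ε > 0, ∃ᶠ a in l, f a < ε := by
  have hcob : IsCoboundedUnder (· ≥ ·) l f := hb.isCoboundedUnder_flip
  refine ⟨fun h ε hε ↦ frequently_lt_of_liminf_lt hcob (h ▸ hε), fun h ↦ ?_⟩
  refine le_antisymm (le_of_forall_pos_le_add fun ε hε ↦ ?_) (le_liminf_of_le hcob h₀)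
  rw [zero_add]
  exact liminf_le_of_frequently_le ((h ε hε).mono fun a ha ↦ ha.le)
    (isBoundedUnder_of_eventually_ge h₀)

theorem mem_posTangentConeAt_iff_liminf_infDist_div {s : Set E} {x z : E} (hx : x ∈ closure s) :
    z ∈ posTangentConeAt s x ↔
      liminf (fun τ : ℝ ↦ infDist (x + τ • z) s / τ) (𝓝[>] 0) = 0 := by
  rw [liminf_eq_zero_iff_frequently_lt]
  · exact ⟨fun hz _ ↦ frequently_infDist_div_lt_of_mem_posTangentConeAt hz,
      mem_posTangentConeAt_of_frequently_infDist_div_lt hx⟩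
  · filter_upwards [self_mem_nhdsWithin] with τ (hτ : 0 < τ)
    exact div_nonneg infDist_nonneg hτ.le
  · refine isBoundedUnder_of_eventually_le (a := ‖z‖) ?_
    filter_upwards [self_mem_nhdsWithin] with τ (hτ : 0 < τ)
    rw [div_le_iff₀' hτ]
    exact infDist_add_smul_le hx z hτ.le

theorem eventually_nonneg_comp_add_smul {f : E → ℝ} {f' : E →L[ℝ] ℝ} {x w : E}
    (hf : HasFDerivAt f f' x) (h₀ : 0 ≤ f x) (hw : f x = 0 → 0 < f' w) :
    ∀ᶠ τ in 𝓝[>] (0 : ℝ), 0 ≤ f (x + τ • w) := by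
  have hline : HasDerivAt (fun τ : ℝ ↦ f (x + τ • w)) (f' w) 0 :=
    hf.comp_hasDerivAt_of_eq 0
      (by simpa using ((hasDerivAt_id (0 : ℝ)).smul_const w).const_add x) (by simp)
  rcases h₀.eq_or_lt with h | h
  · filter_upwards [hline.tendsto_slope_zero_right.eventually (lt_mem_nhds (hw h.symm)),
      self_mem_nhdsWithin] with τ hτ (hτ₀ : 0 < τ)
    simp only [zero_add, zero_smul, add_zero, ← h, sub_zero, smul_eq_mul] at hτ
    exact (pos_of_mul_pos_right hτ (inv_nonneg.2 hτ₀.le)).le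
  · have := hline.continuousAt.eventually (lt_mem_nhds (by simpa using h))
    exact (this.filter_mono nhdsWithin_le_nhds).mono fun τ hτ ↦ hτ.le

theorem posTangentConeAt_iInter_nonneg {ι : Type*} [Finite ι] {g : ι → E → ℝ}
    {g' : ι → E →L[ℝ] ℝ} {x : E} (hg : ∀ j, HasFDerivAt (g j) (g' j) x) (hx : ∀ j, 0 ≤ g j x)
    (hslater : ∃ z₀, ∀ j, 0 < g j x + g' j z₀) :
    posTangentConeAt (⋂ j, {y | 0 ≤ g j y}) x = {z | ∀ j, g j x = 0 → 0 ≤ g' j z} := by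
  ext z
  refine ⟨fun hz j hj ↦ ?_, fun hz ↦ ?_⟩
  · have hmin : IsLocalMinOn (g j) (⋂ j, {y | 0 ≤ g j y}) x :=
      IsMinOn.localize fun y hy ↦ hj ▸ mem_iInter.1 hy j
    exact hmin.hasFDerivWithinAt_nonneg (hg j).hasFDerivWithinAt hz
  obtain ⟨z₀, hz₀⟩ := hslater
  have hperturbed :
      ∀ ε : ℝ, 0 < ε → z + ε • z₀ ∈ posTangentConeAt (⋂ j, {y | 0 ≤ g j y}) x := by
    intro ε hε
    refine mem_posTangentConeAt_of_frequently_mem (Eventually.frequently ?_)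
    simp only [mem_iInter, mem_ofPred_eq]
    refine eventually_all.2 fun j ↦ eventually_nonneg_comp_add_smul (hg j) (hx j) fun hj ↦ ?_
    have := hz₀ j
    rw [hj, zero_add] at this
    rw [map_add, map_smul, smul_eq_mul]
    exact add_pos_of_nonneg_of_pos (hz j hj) (mul_pos hε this)
  have hlim : Tendsto (fun ε : ℝ ↦ z + ε • z₀) (𝓝[>] 0) (𝓝 z) := by
    have : Continuous fun ε : ℝ ↦ z + ε • z₀ := by fun_prop
    simpa using (this.tendsto 0).mono_left nhdsWithin_le_nhds
  exact (isClosed_tangentConeAt _ _).mem_of_tendsto hlim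
    (eventually_mem_nhdsWithin.mono hperturbed)

end NormedSpace

theorem tangentConeAt'_eq_posTangentConeAt {n : ℕ} {D : Set (Fin n → ℝ)} {x : Fin n → ℝ}
    (hx : x ∈ closure D) : tangentConeAt' D x = posTangentConeAt D x := by
  set e := (EuclideanSpace.equiv (Fin n) ℝ).symm
  ext z
  rw [← e.mem_posTangentConeAt_image_iff,
    mem_posTangentConeAt_iff_liminf_infDist_div (e.image_closure D ▸ mem_image_of_mem e hx)]
  simp only [tangentConeAt', mem_ofPred_eq, toEuc, map_add, map_smul]
  rfl

theorem tangentCone_practical_semialgebraic_general {n s : ℕ} (r : Fin s → ℕ)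
    (b : (i : Fin s) → Fin (r i) → MvPolynomial (Fin n) ℝ)
    (Cpart : Fin s → Set (Fin n → ℝ))
    (hCi : ∀ i, Cpart i = ⋂ j : Fin (r i), {x : Fin n → ℝ | 0 ≤ eval x (b i j)})
    (Cset : Set (Fin n → ℝ)) (hC : Cset = ⋃ i, Cpart i)
    (hpractical : ∀ i, ∀ x ∈ Cpart i, ∃ z : Fin n → ℝ, ∀ j : Fin (r i),
      0 < eval x (b i j) + ∑ k, eval x (pderiv k (b i j)) * z k)
    (x : Fin n → ℝ) (hx : x ∈ Cset) :
    tangentConeAt' Cset x =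
      ⋃ i ∈ {i : Fin s | x ∈ Cpart i},
        ⋂ j ∈ {j : Fin (r i) | eval x (b i j) = 0},
          {z : Fin n → ℝ | 0 ≤ ∑ k, eval x (pderiv k (b i j)) * z k} := by
  rw [tangentConeAt'_eq_posTangentConeAt (subset_closure hx), hC,
    show posTangentConeAt (⋃ i, Cpart i) x = ⋃ i, posTangentConeAt (Cpart i) x from
      tangentConeAt_iUnion _ _]
  refine iUnion_congr fun i ↦ ?_
  by_cases hxi : x ∈ Cpart i
  · have hval : ∀ j, 0 ≤ eval x (b i j) := fun j ↦ mem_iInter.1 (hCi i ▸ hxi) j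
    obtain ⟨z₀, hz₀⟩ := hpractical i x hxi
    rw [hCi i, posTangentConeAt_iInter_nonneg (fun j ↦ hasFDerivAt_eval (b i j) x) hval
      ⟨z₀, by simpa only [fderivEval_apply] using hz₀⟩]
    ext z
    simp [hxi, fderivEval_apply]
  · have hclosed : IsClosed (Cpart i) := hCi i ▸
      isClosed_iInter fun j ↦ isClosed_le continuous_const (continuous_eval _)
    have : posTangentConeAt (Cpart i) x = ∅ := eq_empty_of_forall_notMem fun z hz ↦
      hxi (hclosed.closure_subset (mem_closure_of_nonempty_tangentConeAt ⟨z, hz⟩))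
    simp [this, hxi]

/-- tangent cone of a practical semi-algebraic set
`C = ⋃ i ⋂ j {x : b i j x ≥ 0}` at a point `x ∈ C`:
with `S = {i : x ∈ C i}` and `T i = {j : b i j x = 0}` (each nonempty for `i ∈ S`),
`T_C(x) = ⋃_{i ∈ S} ⋂_{j ∈ T i} {z : ∇b_{ij}(x)·z ≥ 0}`. -/
theorem tangentCone_practical_semialgebraic {n s : ℕ} (r : Fin s → ℕ)
    (b : (i : Fin s) → Fin (r i) → MvPolynomial (Fin n) ℝ)
    (Cpart : Fin s → Set (Fin n → ℝ))
    (hCi : ∀ i, Cpart i = ⋂ j : Fin (r i), {x : Fin n → ℝ | 0 ≤ eval x (b i j)})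
    (Cset : Set (Fin n → ℝ)) (hC : Cset = ⋃ i, Cpart i)
    (hpractical : ∀ i, ∀ x ∈ Cpart i, ∃ z : Fin n → ℝ, ∀ j : Fin (r i),
      0 < eval x (b i j) + ∑ k, eval x (pderiv k (b i j)) * z k)
    (x : Fin n → ℝ) (hx : x ∈ Cset)
    (hTne : ∀ i, x ∈ Cpart i → ∃ j : Fin (r i), eval x (b i j) = 0) :
    tangentConeAt' Cset x =
      ⋃ i ∈ {i : Fin s | x ∈ Cpart i},
        ⋂ j ∈ {j : Fin (r i) | eval x (b i j) = 0},
          {z : Fin n → ℝ | 0 ≤ ∑ k, eval x (pderiv k (b i j)) * z k} :=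
  tangentCone_practical_semialgebraic_general r b Cpart hCi Cset hC hpractical x hx
end

section
/- Let b : ℝⁿ → ℝ be a polynomial with ∇b(x) ≠ 0 whenever b(x) = 0, and let C = {x : b(x) ≥ 0}. Consider the system ẋ = f(x) + g(x)u with polynomial f, g and unconstrained input U = ℝᵐ. Then C is viable if and only if there exists no x ∈ ℝⁿ satisfying b(x) = 0, ∇b(x)ᵀg(x) = 0 (all m entries of the row vector vanish), and ∇b(x)ᵀf(x) < 0. -/
/-!
At a zero `x` of `b` with `∇b(x) ≠ 0`, the Bouligand tangent cone of `{b ≥ 0}` is the half-space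
`{v | ∇b(x) ⬝ v ≥ 0}`. One inclusion is Fermat's rule, since `x` minimizes `b` on `{b ≥ 0}` and the
Bouligand cone lies in the positive tangent cone; for the other, if `∇b(x) ⬝ w = 1` then
`x + τ (v + η w)` lies in `{b ≥ 0}` for small `τ > 0`, so `dist(x + τ v, {b ≥ 0}) ≤ τ η ‖w‖`.
The nondegeneracy of `∇b` also makes the boundary of `{b ≥ 0}` exactly `{b = 0}`. Viability thus
asks, at every zero of `b`, for an input `u` with `∇b ⬝ f + ∑ⱼ (∇b ⬝ gⱼ) uⱼ ≥ 0`, which exists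
unless all `∇b ⬝ gⱼ` vanish and `∇b ⬝ f < 0`.
-/

open Filter MvPolynomial

/-- `D` is viable for `ẋ = f(x) + g(x)u`, `u ∈ U`: at every boundary point some
admissible input keeps the vector field in the tangent cone. -/
def Viable {n m : ℕ} (f : Fin n → MvPolynomial (Fin n) ℝ)
    (g : Fin n → Fin m → MvPolynomial (Fin n) ℝ) (U : Set (Fin m → ℝ))
    (D : Set (Fin n → ℝ)) : Prop :=
  ∀ x ∈ frontier D, ∃ u ∈ U,
    (fun i => eval x (f i) + ∑ j, eval x (g i j) * u j) ∈ tangentConeAt' D x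

open Metric Set Topology

theorem MvPolynomial.hasFDerivAt_eval_s5 {𝕜 σ : Type*} [NontriviallyNormedField 𝕜] [Fintype σ]
    (p : MvPolynomial σ 𝕜) (x : σ → 𝕜) :
    HasFDerivAt (fun y => eval y p)
      (∑ i, eval x (pderiv i p) • (ContinuousLinearMap.proj i : (σ → 𝕜) →L[𝕜] 𝕜)) x := by
  classical
  induction p using MvPolynomial.induction_on with
  | C a =>
    simp only [eval_C]
    refine (hasFDerivAt_const (𝕜 := 𝕜) a x).congr_fderiv ?_
    ext v
    simp
  | add p q hp hq =>
    simp only [map_add]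
    refine (hp.fun_add hq).congr_fderiv ?_
    ext v
    simp [add_mul, Finset.sum_add_distrib]
  | mul_X p i hp =>
    simp only [map_mul, eval_X]
    refine (hp.fun_mul (hasFDerivAt_apply i x)).congr_fderiv ?_
    ext v
    simp [pderiv_X, Pi.single_apply, add_mul, Finset.sum_add_distrib, apply_ite, Finset.mul_sum,
      mul_assoc]

section BouligandCone

variable {E : Type*} [NormedAddCommGroup E] [NormedSpace ℝ E] {s : Set E} {x v : E}

def bouligandCone (s : Set E) (x : E) : Set E :=
  {v | liminf (fun τ : ℝ => infDist (x + τ • v) s / τ) (𝓝[>] 0) = 0}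

theorem infDist_add_smul_div_le (hx : x ∈ s) {τ : ℝ} (hτ : 0 < τ) :
    infDist (x + τ • v) s / τ ≤ ‖v‖ := by
  rw [div_le_iff₀ hτ]
  calc infDist (x + τ • v) s ≤ dist (x + τ • v) x := infDist_le_dist_of_mem hx
    _ = ‖v‖ * τ := by simp [norm_smul, abs_of_pos hτ, mul_comm]

theorem bouligandCone_subset_posTangentConeAt (hx : x ∈ s) :
    bouligandCone s x ⊆ posTangentConeAt s x := by
  intro v hv
  -- `x ∈ s` bounds the quotients by `‖v‖`, so that their `liminf` is not a junk value.
  have hfreq : ∀ ε > 0, ∃ᶠ τ in 𝓝[>] (0 : ℝ), infDist (x + τ • v) s / τ < ε := fun ε hε =>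
    frequently_lt_of_liminf_lt (isCoboundedUnder_ge_of_eventually_le _
      (eventually_nhdsWithin_of_forall fun τ hτ => infDist_add_smul_div_le hx hτ))
      (hv.trans_lt hε)
  have hseq : ∀ k : ℕ, ∃ τ ∈ Ioo (0 : ℝ) (1 / (k + 1)), ∃ w, dist w v < 1 / (k + 1) ∧
      x + τ • w ∈ s := by
    intro k
    have hk : (0 : ℝ) < 1 / (k + 1) := Nat.one_div_pos_of_nat
    obtain ⟨τ, hτ, hτs⟩ := ((hfreq _ hk).and_eventually (Ioo_mem_nhdsGT hk)).exists
    obtain ⟨y, hy, hdist⟩ := (infDist_lt_iff ⟨x, hx⟩).1 ((div_lt_iff₀ hτs.1).1 hτ)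
    refine ⟨τ, hτs, τ⁻¹ • (y - x), ?_, by simpa [smul_smul, hτs.1.ne'] using hy⟩
    have hw : τ⁻¹ • (y - x) - v = τ⁻¹ • (y - (x + τ • v)) := by
      simp [smul_sub, smul_smul, hτs.1.ne']; abel
    rw [dist_eq_norm, hw, norm_smul, norm_inv, Real.norm_of_nonneg hτs.1.le, ← dist_eq_norm,
      dist_comm, inv_mul_lt_iff₀ hτs.1, mul_comm]
    exact hdist
  choose τ hτ w hw hws using hseq
  have hτ0 : Tendsto τ atTop (𝓝 0) := squeeze_zero (fun k => (hτ k).1.le)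
    (fun k => (hτ k).2.le) tendsto_one_div_add_atTop_nhds_zero_nat
  have hwv : Tendsto w atTop (𝓝 v) := tendsto_iff_dist_tendsto_zero.2 <|
    squeeze_zero (fun _ => dist_nonneg) (fun k => (hw k).le) tendsto_one_div_add_atTop_nhds_zero_nat
  refine mem_tangentConeAt_of_seq atTop (fun k => ⟨(τ k)⁻¹, (inv_pos.2 (hτ k).1).le⟩)
    (fun k => τ k • w k) (by simpa using hτ0.smul hwv) (Eventually.of_forall hws) ?_
  refine hwv.congr fun k => ?_
  show w k = ((τ k)⁻¹ : ℝ) • τ k • w k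
  simp [smul_smul, (hτ k).1.ne']

variable {φ : E → ℝ} {φ' : StrongDual ℝ E}

theorem HasFDerivAt.eventually_pos_add_smul (hφ : HasFDerivAt φ φ' x) (hx : 0 ≤ φ x)
    (hv : 0 < φ' v) : ∀ᶠ τ in 𝓝[>] (0 : ℝ), 0 < φ (x + τ • v) := by
  have hline : HasDerivAt (fun τ : ℝ => φ (x + τ • v)) (φ' v) 0 := by
    refine hφ.comp_hasDerivAt_of_eq (f := fun τ : ℝ => x + τ • v) _ ?_ (by simp)
    simpa using ((hasDerivAt_id (0 : ℝ)).smul_const v).const_add x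
  filter_upwards [hline.tendsto_slope_zero_right.eventually_const_lt hv, self_mem_nhdsWithin]
    with τ hslope hτ
  simp only [zero_add, zero_smul, add_zero, smul_eq_mul] at hslope
  have := pos_of_mul_pos_right hslope (inv_pos.2 (show 0 < τ from hτ)).le
  linarith

theorem nonneg_of_mem_bouligandCone_setOf_nonneg (hφ : HasFDerivAt φ φ' x) (hx : φ x = 0)
    (hv : v ∈ bouligandCone {y | 0 ≤ φ y} x) : 0 ≤ φ' v := by
  have hmin : IsLocalMinOn φ {y | 0 ≤ φ y} x :=
    eventually_nhdsWithin_of_forall fun y (hy : 0 ≤ φ y) => hx.trans_le hy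
  have hxs : x ∈ {y | 0 ≤ φ y} := hx.ge
  exact hmin.hasFDerivWithinAt_nonneg hφ.hasFDerivWithinAt
    (bouligandCone_subset_posTangentConeAt hxs hv)

theorem mem_bouligandCone_setOf_nonneg (hφ : HasFDerivAt φ φ' x) (hx : 0 ≤ φ x) (hφ' : φ' ≠ 0)
    (hv : 0 ≤ φ' v) : v ∈ bouligandCone {y | 0 ≤ φ y} x := by
  obtain ⟨a, ha⟩ : ∃ a, φ' a ≠ 0 := by simpa using DFunLike.ne_iff.1 hφ'
  set w := (φ' a)⁻¹ • a
  have hw : φ' w = 1 := by simp [w, ha]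
  refine Tendsto.liminf_eq (Metric.tendsto_nhds.2 fun ε hε => ?_)
  set η := ε / (‖w‖ + 1)
  have hηw : η * ‖w‖ < ε := by
    rw [div_mul_eq_mul_div, div_lt_iff₀ (by positivity)]; nlinarith [norm_nonneg w]
  have hpush : 0 < φ' (v + η • w) := by simp only [map_add, map_smul, hw]; positivity
  filter_upwards [hφ.eventually_pos_add_smul hx hpush, self_mem_nhdsWithin] with τ hpos hτ
  rw [Real.dist_0_eq_abs, abs_of_nonneg (div_nonneg infDist_nonneg (le_of_lt hτ)),
    div_lt_iff₀ hτ]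
  calc infDist (x + τ • v) {y | 0 ≤ φ y} ≤ dist (x + τ • v) (x + τ • (v + η • w)) :=
        infDist_le_dist_of_mem hpos.le
    _ = η * ‖w‖ * τ := by
        rw [dist_eq_norm]; simp [norm_smul, abs_of_pos (show 0 < τ from hτ),
          abs_of_pos (show 0 < η by positivity)]; ring
    _ < ε * τ := by gcongr

theorem mem_bouligandCone_setOf_nonneg_iff (hφ : HasFDerivAt φ φ' x) (hx : φ x = 0)
    (hφ' : φ' ≠ 0) : v ∈ bouligandCone {y | 0 ≤ φ y} x ↔ 0 ≤ φ' v :=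
  ⟨nonneg_of_mem_bouligandCone_setOf_nonneg hφ hx, mem_bouligandCone_setOf_nonneg hφ hx.ge hφ'⟩

end BouligandCone

theorem frontier_setOf_nonneg_of_hasFDerivAt {E : Type*} [NormedAddCommGroup E]
    [NormedSpace ℝ E] {φ : E → ℝ} {φ' : E → StrongDual ℝ E} (hφ : ∀ x, HasFDerivAt φ (φ' x) x)
    (hφ' : ∀ x, φ x = 0 → φ' x ≠ 0) : frontier {x | 0 ≤ φ x} = {x | φ x = 0} := by
  have hcont : Continuous φ := continuous_iff_continuousAt.2 fun x => (hφ x).continuousAt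
  refine Subset.antisymm (fun x hx => (frontier_le_subset_eq continuous_const hcont hx).symm)
    fun x hx => ⟨subset_closure (show 0 ≤ φ x from hx.symm.le), fun hint => hφ' x hx ?_⟩
  have hmin : IsLocalMin φ x :=
    mem_of_superset (mem_interior_iff_mem_nhds.1 hint) fun y hy => hx.trans_le hy
  exact hmin.hasFDerivAt_eq_zero (hφ x)

theorem sum_smul_proj_ne_zero {𝕜 σ : Type*} [NontriviallyNormedField 𝕜] [Fintype σ]
    {c : σ → 𝕜} (hc : ∃ k, c k ≠ 0) :
    ∑ i, c i • (ContinuousLinearMap.proj i : (σ → 𝕜) →L[𝕜] 𝕜) ≠ 0 := by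
  classical
  obtain ⟨k, hk⟩ := hc
  intro h0
  exact hk (by simpa [Pi.single_apply] using congr($h0 (Pi.single k 1)))

theorem frontier_setOf_nonneg_eval {σ : Type*} [Fintype σ] {b : MvPolynomial σ ℝ}
    (hgrad : ∀ x : σ → ℝ, eval x b = 0 → ∃ k, eval x (pderiv k b) ≠ 0) :
    frontier {x : σ → ℝ | 0 ≤ eval x b} = {x | eval x b = 0} :=
  frontier_setOf_nonneg_of_hasFDerivAt (b.hasFDerivAt_eval_s5 ·)
    fun x hx => sum_smul_proj_ne_zero (hgrad x hx)

theorem mem_tangentConeAt'_iff {n : ℕ} {D : Set (Fin n → ℝ)} {x v : Fin n → ℝ} :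
    v ∈ tangentConeAt' D x ↔ toEuc v ∈ bouligandCone (toEuc '' D) (toEuc x) := by
  simp only [tangentConeAt', bouligandCone, toEuc, map_add, map_smul]
  rfl

theorem mem_tangentConeAt'_setOf_nonneg_eval_iff {n : ℕ} {b : MvPolynomial (Fin n) ℝ}
    {x v : Fin n → ℝ} (hx : eval x b = 0) (hgrad : ∃ k, eval x (pderiv k b) ≠ 0) :
    v ∈ tangentConeAt' {y | 0 ≤ eval y b} x ↔ 0 ≤ ∑ k, eval x (pderiv k b) * v k := by
  set e := EuclideanSpace.equiv (Fin n) ℝ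
  set D := ∑ i, eval x (pderiv i b) • (ContinuousLinearMap.proj i : (Fin n → ℝ) →L[ℝ] ℝ)
  have himage : toEuc '' {y | 0 ≤ eval y b} = {z | 0 ≤ eval (e z) b} :=
    e.symm.image_eq_preimage_symm _
  have hφ : HasFDerivAt (fun z => eval (e z) b)
      (D.comp (e : EuclideanSpace ℝ (Fin n) →L[ℝ] (Fin n → ℝ))) (toEuc x) :=
    HasFDerivAt.comp (g := fun y => eval y b) (toEuc x) (b.hasFDerivAt_eval_s5 x) e.hasFDerivAt
  have hφ' : D.comp (e : EuclideanSpace ℝ (Fin n) →L[ℝ] (Fin n → ℝ)) ≠ 0 := fun h0 =>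
    sum_smul_proj_ne_zero hgrad (ContinuousLinearMap.ext fun w => by
      simpa [D] using congr($h0 (e.symm w)))
  rw [mem_tangentConeAt'_iff, himage, mem_bouligandCone_setOf_nonneg_iff hφ (by simpa [toEuc]) hφ']
  simp [D, e, toEuc]

theorem exists_nonneg_add_sum_mul_iff {𝕜 ι : Type*} [Field 𝕜] [LinearOrder 𝕜]
    [IsStrictOrderedRing 𝕜] [Fintype ι] (c : 𝕜) (a : ι → 𝕜) :
    (∃ u : ι → 𝕜, 0 ≤ c + ∑ j, a j * u j) ↔ ((∀ j, a j = 0) → 0 ≤ c) := by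
  classical
  refine ⟨fun ⟨u, hu⟩ ha => by simpa [ha] using hu, fun h => ?_⟩
  by_cases ha : ∀ j, a j = 0
  · exact ⟨0, by simpa using h ha⟩
  obtain ⟨j, hj⟩ := not_forall.1 ha
  refine ⟨Pi.single j (-c / a j), ?_⟩
  simp [Pi.single_apply, mul_div_cancel₀ _ hj]

/-- with `∇b ≠ 0` on `{b = 0}` and unconstrained input,
`C = {b ≥ 0}` is viable iff there is no `x` with `b(x) = 0`, `∇b(x)ᵀg(x) = 0`
and `∇b(x)ᵀf(x) < 0`. -/
theorem viability_single_polynomial {n m : ℕ} (b : MvPolynomial (Fin n) ℝ)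
    (f : Fin n → MvPolynomial (Fin n) ℝ)
    (g : Fin n → Fin m → MvPolynomial (Fin n) ℝ)
    (hgrad : ∀ x : Fin n → ℝ, eval x b = 0 → ∃ k, eval x (pderiv k b) ≠ 0) :
    Viable f g Set.univ {x : Fin n → ℝ | 0 ≤ eval x b} ↔
      ¬ ∃ x : Fin n → ℝ, eval x b = 0 ∧
        (∀ j : Fin m, ∑ k, eval x (pderiv k b) * eval x (g k j) = 0) ∧
        ∑ k, eval x (pderiv k b) * eval x (f k) < 0 := by
  have hfield : ∀ (x : Fin n → ℝ) (u : Fin m → ℝ),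
      ∑ k, eval x (pderiv k b) * (eval x (f k) + ∑ j, eval x (g k j) * u j) =
        ∑ k, eval x (pderiv k b) * eval x (f k) +
          ∑ j, (∑ k, eval x (pderiv k b) * eval x (g k j)) * u j := by
    intro x u
    simp only [mul_add, Finset.sum_add_distrib, Finset.mul_sum, Finset.sum_mul, mul_assoc]
    rw [Finset.sum_comm]
  simp only [Viable, frontier_setOf_nonneg_eval hgrad, mem_univ, true_and,
    not_exists, not_and, not_lt]
  refine forall₂_congr fun x hx => ?_
  simp only [mem_tangentConeAt'_setOf_nonneg_eval_iff hx (hgrad x hx), hfield,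
    exists_nonneg_add_sum_mul_iff]
end

section
/- Let b₁,…,b_r : ℝⁿ → ℝ be polynomials and suppose C = {x : b_i(x) ≥ 0 for all i = 1,…,r} is compact and nonempty. Suppose that for every x ∈ C there exists u ∈ ℝᵐ with Au ≤ c and ∇b_i(x)ᵀ(f(x) + g(x)u) > 0 for every index i with b_i(x) = 0, where f, g are polynomial maps. Then C is feedback controlled positive invariant: there exists a continuous function μ : C → ℝᵐ with Aμ(x) ≤ c for all x ∈ C and (f(x) + g(x)μ(x)) ∈ T_C(x) for all x ∈ ∂C. -/
/-!
Call an input admissible at `x` if it lies in `U` and strictly increases every constraint active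
at `x`. The admissible inputs at `x` form a convex set, and an input admissible at `x₀` stays
admissible near `x₀`: constraints inactive at `x₀` stay inactive, and the strict inequalities for
the active ones persist. A partition of unity therefore glues locally constant admissible inputs
into a continuous feedback `μ` on `C`. At `x ∈ C` the closed-loop velocity `z` keeps inactive
constraints positive by continuity and increases active ones to first order, so `x + τ z ∈ C` for
all small `τ > 0`, which puts `z` in the tangent cone.
-/

open Filter MvPolynomial

open Topology

theorem exists_continuousOn_forall_mem_convex_of_local_const {X E : Type*} [PseudoMetricSpace X]
    [AddCommGroup E] [Module ℝ E] [TopologicalSpace E] [ContinuousAdd E] [ContinuousSMul ℝ E]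
    {s : Set X} {t : X → Set E} (ht : ∀ x ∈ s, Convex ℝ (t x))
    (H : ∀ x ∈ s, ∃ c, ∀ᶠ y in 𝓝[s] x, c ∈ t y) :
    ∃ μ : X → E, ContinuousOn μ s ∧ ∀ x ∈ s, μ x ∈ t x := by
  classical
  obtain ⟨μ, hμ⟩ := exists_continuous_forall_mem_convex_of_local_const (X := s)
    (t := fun x => t x) (fun x => ht x x.2) fun x => by
      obtain ⟨c, hc⟩ := H x x.2
      exact ⟨c, by rw [nhds_subtype_eq_comap_nhdsWithin]; exact hc.comap _⟩
  refine ⟨fun x => if hx : x ∈ s then μ ⟨x, hx⟩ else 0, ?_,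
    fun x hx => by simpa [hx] using hμ ⟨x, hx⟩⟩
  rw [continuousOn_iff_continuous_domRestrict]
  convert μ.continuous with x
  simp

theorem mem_tangentConeAt'_of_eventually_mem {n : ℕ} {D : Set (Fin n → ℝ)} {x z : Fin n → ℝ}
    (h : ∀ᶠ τ in 𝓝[>] (0 : ℝ), x + τ • z ∈ D) : z ∈ tangentConeAt' D x := by
  have hzero : (fun τ : ℝ => Metric.infDist (toEuc (x + τ • z)) (toEuc '' D) / τ)
      =ᶠ[𝓝[>] 0] fun _ => 0 :=
    h.mono fun τ hτ => by simp [Metric.infDist_zero_of_mem (Set.mem_image_of_mem _ hτ)]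
  change liminf _ _ = 0
  rw [liminf_congr hzero, liminf_const]

namespace MvPolynomial

variable {n : ℕ}

noncomputable def dirDeriv (P : MvPolynomial (Fin n) ℝ) (x z : Fin n → ℝ) : ℝ :=
  ∑ k, eval x (pderiv k P) * z k

theorem hasDerivAt_eval_add_smul (P : MvPolynomial (Fin n) ℝ) (x z : Fin n → ℝ) (t : ℝ) :
    HasDerivAt (fun τ : ℝ => eval (x + τ • z) P) (dirDeriv P (x + t • z) z) t := by
  induction P using MvPolynomial.induction_on with
  | C a => simpa [dirDeriv] using hasDerivAt_const t a
  | add p q hp hq => simpa [dirDeriv, add_mul, Finset.sum_add_distrib] using hp.fun_add hq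
  | mul_X p j hp =>
    have hXj : HasDerivAt (fun τ : ℝ => x j + τ * z j) (z j) t := by
      simpa using ((hasDerivAt_id t).mul_const (z j)).const_add (x j)
    have hfun : (fun τ : ℝ => eval (x + τ • z) (p * X j)) =
        fun τ => eval (x + τ • z) p * (x j + τ * z j) := by
      funext τ; simp
    rw [hfun]
    refine (hp.fun_mul hXj).congr_deriv ?_
    simp only [dirDeriv, pderiv_mul, pderiv_X, map_add, map_mul, eval_X, add_mul,
      Finset.sum_add_distrib, Finset.sum_mul]
    congr 1
    · refine Finset.sum_congr rfl fun k _ => ?_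
      simp only [Pi.add_apply, Pi.smul_apply, smul_eq_mul]
      ring
    · simp [Pi.single_apply]

theorem eventually_nonneg_eval_add_smul {P : MvPolynomial (Fin n) ℝ} {x z : Fin n → ℝ}
    (hP : 0 ≤ eval x P) (hactive : eval x P = 0 → 0 < dirDeriv P x z) :
    ∀ᶠ τ in 𝓝[>] (0 : ℝ), 0 ≤ eval (x + τ • z) P := by
  have hderiv := hasDerivAt_eval_add_smul P x z 0
  simp only [zero_smul, add_zero] at hderiv
  rcases hP.eq_or_lt with hzero | hpos
  · have hsign := eventually_nhdsWithin_sign_eq_of_deriv_pos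
      (hderiv.deriv ▸ hactive hzero.symm) (by simpa using hzero.symm)
    filter_upwards [nhdsWithin_le_nhds hsign, self_mem_nhdsWithin] with τ hτ (hτ0 : 0 < τ)
    rw [sub_zero, sign_pos hτ0] at hτ
    exact (sign_eq_one_iff.mp hτ).le
  · exact (hderiv.continuousAt.eventually (eventually_gt_nhds (by simpa))).filter_mono
      nhdsWithin_le_nhds |>.mono fun _ h => h.le

end MvPolynomial

section ControlAffine

variable {n m p r : ℕ} (f : Fin n → MvPolynomial (Fin n) ℝ)
  (g : Fin n → Fin m → MvPolynomial (Fin n) ℝ)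

noncomputable def controlField (x : Fin n → ℝ) (u : Fin m → ℝ) : Fin n → ℝ :=
  fun k => eval x (f k) + ∑ j, eval x (g k j) * u j

theorem continuous_dirDeriv_controlField (P : MvPolynomial (Fin n) ℝ) (u : Fin m → ℝ) :
    Continuous fun x => dirDeriv P x (controlField f g x u) :=
  continuous_finsetSum _ fun _ _ => (continuous_eval _).mul <| (continuous_eval _).add <|
    continuous_finsetSum _ fun _ _ => (continuous_eval _).mul continuous_const

theorem convex_setOf_dirDeriv_controlField_pos (P : MvPolynomial (Fin n) ℝ) (x : Fin n → ℝ) :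
    Convex ℝ {u | 0 < dirDeriv P x (controlField f g x u)} := by
  intro u hu v hv a b ha hb hab
  have hfield : controlField f g x (a • u + b • v) =
      a • controlField f g x u + b • controlField f g x v := by
    funext k
    have hsum : ∑ j, eval x (g k j) * (a * u j + b * v j) =
        a * ∑ j, eval x (g k j) * u j + b * ∑ j, eval x (g k j) * v j := by
      simp only [Finset.mul_sum, ← Finset.sum_add_distrib]
      exact Finset.sum_congr rfl fun j _ => by ring
    simp only [controlField, Pi.add_apply, Pi.smul_apply, smul_eq_mul]
    rw [hsum]
    linear_combination (-eval x (f k)) * hab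
  have hlinear : ∀ z w : Fin n → ℝ, dirDeriv P x (a • z + b • w) =
      a • dirDeriv P x z + b • dirDeriv P x w := fun z w => by
    simp only [dirDeriv, smul_eq_mul, Finset.mul_sum, ← Finset.sum_add_distrib]
    refine Finset.sum_congr rfl fun k _ => ?_
    simp only [Pi.add_apply, Pi.smul_apply, smul_eq_mul]
    ring
  change 0 < dirDeriv P x (controlField f g x (a • u + b • v))
  rw [hfield, hlinear]
  exact convex_Ioi 0 hu hv ha hb hab

def admissibleInputs (A : Matrix (Fin p) (Fin m) ℝ) (c : Fin p → ℝ)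
    (b : Fin r → MvPolynomial (Fin n) ℝ) (x : Fin n → ℝ) : Set (Fin m → ℝ) :=
  {u | A.mulVec u ≤ c} ∩
    ⋂ i ∈ {i | eval x (b i) = 0}, {u | 0 < dirDeriv (b i) x (controlField f g x u)}

theorem convex_admissibleInputs (A : Matrix (Fin p) (Fin m) ℝ) (c : Fin p → ℝ)
    (b : Fin r → MvPolynomial (Fin n) ℝ) (x : Fin n → ℝ) :
    Convex ℝ (admissibleInputs f g A c b x) :=
  ((convex_Iic c).linear_preimage A.mulVecLin).inter <|
    convex_iInter₂ fun i _ => convex_setOf_dirDeriv_controlField_pos f g (b i) x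

theorem eventually_mem_admissibleInputs {A : Matrix (Fin p) (Fin m) ℝ} {c : Fin p → ℝ}
    {b : Fin r → MvPolynomial (Fin n) ℝ} {x₀ : Fin n → ℝ} {u : Fin m → ℝ}
    (hu : u ∈ admissibleInputs f g A c b x₀) :
    ∀ᶠ x in 𝓝 x₀, u ∈ admissibleInputs f g A c b x := by
  obtain ⟨hAu, hactive⟩ := hu
  rw [Set.mem_iInter₂] at hactive
  have hnear : ∀ i, ∀ᶠ x in 𝓝 x₀,
      eval x (b i) = 0 → 0 < dirDeriv (b i) x (controlField f g x u) := by
    intro i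
    by_cases hi : eval x₀ (b i) = 0
    · exact ((continuous_dirDeriv_controlField f g (b i) u).continuousAt.eventually
        (eventually_gt_nhds (hactive i hi))).mono fun _ h _ => h
    · exact ((continuous_eval (b i)).continuousAt.eventually_ne hi).mono fun _ h h0 => absurd h0 h
  filter_upwards [eventually_all.2 hnear] with x hx
  exact ⟨hAu, Set.mem_iInter₂.2 hx⟩

end ControlAffine

theorem feedback_cpi_simple_general {n m p r : ℕ}
    (b : Fin r → MvPolynomial (Fin n) ℝ)
    (f : Fin n → MvPolynomial (Fin n) ℝ)
    (g : Fin n → Fin m → MvPolynomial (Fin n) ℝ)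
    (A : Matrix (Fin p) (Fin m) ℝ) (c : Fin p → ℝ)
    (Cset : Set (Fin n → ℝ))
    (hC : Cset = {x : Fin n → ℝ | ∀ i : Fin r, 0 ≤ eval x (b i)})
    (hfeas : ∀ x ∈ Cset, ∃ u : Fin m → ℝ, A.mulVec u ≤ c ∧
      ∀ i : Fin r, eval x (b i) = 0 →
        0 < ∑ k, eval x (pderiv k (b i)) * (eval x (f k) + ∑ j, eval x (g k j) * u j)) :
    ∃ μ : (Fin n → ℝ) → (Fin m → ℝ), ContinuousOn μ Cset ∧
      (∀ x ∈ Cset, A.mulVec (μ x) ≤ c) ∧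
      ∀ x ∈ frontier Cset,
        (fun i => eval x (f i) + ∑ j, eval x (g i j) * μ x j) ∈ tangentConeAt' Cset x := by
  obtain ⟨μ, hμ_cont, hμ_mem⟩ := exists_continuousOn_forall_mem_convex_of_local_const
    (s := Cset) (fun x _ => convex_admissibleInputs f g A c b x) fun x hx => by
      obtain ⟨u, hAu, hactive⟩ := hfeas x hx
      exact ⟨u, eventually_nhdsWithin_of_eventually_nhds
        (eventually_mem_admissibleInputs f g ⟨hAu, Set.mem_iInter₂.2 hactive⟩)⟩
  have hC_closed : IsClosed Cset := by
    rw [hC, Set.ofPred_forall]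
    exact isClosed_iInter fun i => isClosed_le continuous_const (continuous_eval (b i))
  refine ⟨μ, hμ_cont, fun x hx => (hμ_mem x hx).1, fun x hx => ?_⟩
  have hxC := hC_closed.frontier_subset hx
  have hactive := Set.mem_iInter₂.1 (hμ_mem x hxC).2
  rw [hC] at hxC
  apply mem_tangentConeAt'_of_eventually_mem
  filter_upwards [eventually_all.2 fun i =>
    eventually_nonneg_eval_add_smul (hxC i) (hactive i)] with τ hτ
  rw [hC]
  exact hτ

/-- if `C = ⋂ i {b i ≥ 0}` is compact and nonempty, and at every
`x ∈ C` some admissible input makes the active constraints strictly increase, then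
`C` is feedback controlled positive invariant. -/
theorem feedback_cpi_simple {n m p r : ℕ}
    (b : Fin r → MvPolynomial (Fin n) ℝ)
    (f : Fin n → MvPolynomial (Fin n) ℝ)
    (g : Fin n → Fin m → MvPolynomial (Fin n) ℝ)
    (A : Matrix (Fin p) (Fin m) ℝ) (c : Fin p → ℝ)
    (Cset : Set (Fin n → ℝ))
    (hC : Cset = {x : Fin n → ℝ | ∀ i : Fin r, 0 ≤ eval x (b i)})
    (hcomp : IsCompact Cset) (hne : Cset.Nonempty)
    (hfeas : ∀ x ∈ Cset, ∃ u : Fin m → ℝ, A.mulVec u ≤ c ∧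
      ∀ i : Fin r, eval x (b i) = 0 →
        0 < ∑ k, eval x (pderiv k (b i)) * (eval x (f k) + ∑ j, eval x (g k j) * u j)) :
    ∃ μ : (Fin n → ℝ) → (Fin m → ℝ), ContinuousOn μ Cset ∧
      (∀ x ∈ Cset, A.mulVec (μ x) ≤ c) ∧
      ∀ x ∈ frontier Cset,
        (fun i => eval x (f i) + ∑ j, eval x (g i j) * μ x j) ∈ tangentConeAt' Cset x :=
  feedback_cpi_simple_general b f g A c Cset hC hfeas
end

section
/- Let b₁,…,b_r : ℝⁿ → ℝ be polynomials with C = {x : b_i(x) ≥ 0 for all i} compact, and let f, g be polynomial maps. Suppose there exists a continuous function μ : C → ℝᵐ such that Aμ(x) ≤ c for all x ∈ C and, for every x ∈ C and every index i with b_i(x) = 0, ∇b_i(x)ᵀ(f(x) + g(x)μ(x)) > 0. Then there exist class-K functions κ₁,…,κ_r : ℝ → ℝ such that for every x ∈ C and every i = 1,…,r, ∇b_i(x)ᵀ(f(x) + g(x)μ(x)) ≥ −κ_i(b_i(x)); in particular, for every x ∈ C there exists u ∈ ℝᵐ with Au ≤ c and ∇b_i(x)ᵀ(f(x) + g(x)u)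 ≥ −κ_i(b_i(x)) for all i. -/
open MvPolynomial

/-- given a continuous admissible feedback `μ` that strictly increases
all active constraints on the compact set `C = ⋂ i {b i ≥ 0}`, there exist class-K
functions `κ i` such that the CBF inequalities hold along `μ` on all of `C`. -/
theorem classK_from_feedback {n m p r : ℕ}
    (b : Fin r → MvPolynomial (Fin n) ℝ)
    (f : Fin n → MvPolynomial (Fin n) ℝ)
    (g : Fin n → Fin m → MvPolynomial (Fin n) ℝ)
    (A : Matrix (Fin p) (Fin m) ℝ) (c : Fin p → ℝ)
    (Cset : Set (Fin n → ℝ))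
    (hC : Cset = {x : Fin n → ℝ | ∀ i : Fin r, 0 ≤ eval x (b i)})
    (hcomp : IsCompact Cset)
    (μ : (Fin n → ℝ) → (Fin m → ℝ)) (hμcont : ContinuousOn μ Cset)
    (hμadm : ∀ x ∈ Cset, A.mulVec (μ x) ≤ c)
    (hμact : ∀ x ∈ Cset, ∀ i : Fin r, eval x (b i) = 0 →
      0 < ∑ k, eval x (pderiv k (b i)) * (eval x (f k) + ∑ j, eval x (g k j) * μ x j)) :
    ∃ κ : Fin r → (ℝ → ℝ),
      (∀ i, Continuous (κ i) ∧ StrictMono (κ i) ∧ κ i 0 = 0) ∧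
      (∀ x ∈ Cset, ∀ i : Fin r,
        -(κ i (eval x (b i))) ≤
          ∑ k, eval x (pderiv k (b i)) * (eval x (f k) + ∑ j, eval x (g k j) * μ x j)) ∧
      (∀ x ∈ Cset, ∃ u : Fin m → ℝ, A.mulVec u ≤ c ∧ ∀ i : Fin r,
        -(κ i (eval x (b i))) ≤
          ∑ k, eval x (pderiv k (b i)) * (eval x (f k) + ∑ j, eval x (g k j) * u j)) := by
  -- the "CBF derivative" along μ
  set φ : Fin r → (Fin n → ℝ) → ℝ := fun i x =>
    ∑ k, eval x (pderiv k (b i)) * (eval x (f k) + ∑ j, eval x (g k j) * μ x j) with hφdef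
  have hb_nonneg : ∀ x ∈ Cset, ∀ i, (0:ℝ) ≤ eval x (b i) := by
    intro x hx i; rw [hC] at hx; exact hx i
  have hφcont : ∀ i, ContinuousOn (φ i) Cset := by
    intro i
    apply continuousOn_finset_sum
    intro k _
    apply ContinuousOn.mul (MvPolynomial.continuous_eval _).continuousOn
    apply ContinuousOn.add (MvPolynomial.continuous_eval _).continuousOn
    apply continuousOn_finset_sum
    intro j _
    exact ContinuousOn.mul (MvPolynomial.continuous_eval _).continuousOn
      ((continuous_apply j).comp_continuousOn hμcont)
  have key : ∀ i, ∃ lam : ℝ, 0 < lam ∧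
      ∀ x ∈ Cset, -(lam * eval x (b i)) ≤ φ i x := by
    intro i
    set K : Set (Fin n → ℝ) := Cset ∩ (φ i) ⁻¹' Set.Iic 0 with hKdef
    have hKclosed : IsClosed K :=
      (hφcont i).preimage_isClosed_of_isClosed hcomp.isClosed isClosed_Iic
    have hKcomp : IsCompact K := hcomp.of_isClosed_subset hKclosed Set.inter_subset_left
    have hKpos : ∀ x ∈ K, 0 < eval x (b i) := by
      intro x hx
      rcases hx with ⟨hxC, hxφ⟩
      rcases lt_or_eq_of_le (hb_nonneg x hxC i) with h | h
      · exact h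
      · exact absurd (hμact x hxC i h.symm) (not_lt.mpr hxφ)
    have hnotK : ∀ x ∈ Cset, x ∉ K → 0 < φ i x := by
      intro x hx hxK
      by_contra h
      exact hxK ⟨hx, le_of_not_gt h⟩
    rcases K.eq_empty_or_nonempty with hKe | hKne
    · refine ⟨1, one_pos, fun x hx => ?_⟩
      have : 0 < φ i x := hnotK x hx (by simp [hKe])
      nlinarith [hb_nonneg x hx i]
    · obtain ⟨x₀, hx₀K, hx₀min⟩ :=
        hKcomp.exists_isMinOn hKne
          (((MvPolynomial.continuous_eval (b i)).continuousOn).mono Set.inter_subset_left)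
      set δ := eval x₀ (b i) with hδdef
      have hδpos : 0 < δ := hKpos x₀ hx₀K
      obtain ⟨x₁, hx₁C, hx₁max⟩ :=
        hcomp.exists_isMaxOn ⟨x₀, hx₀K.1⟩ ((hφcont i).neg)
      set M := -φ i x₁ with hMdef
      refine ⟨max M 0 / δ + 1, by positivity, fun x hx => ?_⟩
      by_cases hxK : x ∈ K
      · have hbge : δ ≤ eval x (b i) := hx₀min hxK
        have hφge : -φ i x ≤ M := hx₁max hxK.1
        have h1 : max M 0 + δ ≤ (max M 0 / δ + 1) * eval x (b i) := by
          have : (max M 0 / δ + 1) * δ ≤ (max M 0 / δ + 1) * eval x (b i) := by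
            apply mul_le_mul_of_nonneg_left hbge; positivity
          calc max M 0 + δ = (max M 0 / δ + 1) * δ := by field_simp
            _ ≤ _ := this
        nlinarith [le_max_left M 0]
      · have h0 : 0 < φ i x := hnotK x hx hxK
        have h1 : 0 ≤ (max M 0 / δ + 1) * eval x (b i) :=
          mul_nonneg (by positivity) (hb_nonneg x hx i)
        linarith
  choose lam hlampos hlam using key
  refine ⟨fun i t => lam i * t, fun i => ⟨by continuity, fun s t hst => by
      exact mul_lt_mul_of_pos_left hst (hlampos i), mul_zero _⟩, ?_, ?_⟩
  · intro x hx i; exact hlam i x hx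
  · intro x hx
    exact ⟨μ x, hμadm x hx, fun i => hlam i x hx⟩
end

section
/- Let 1 ≤ l ≤ n, L = 2(n−l), and let f̄ : ℝ^{l+L} → ℝⁿ be continuously differentiable. Define f : ℝⁿ → ℝⁿ by f(x) = f̄(x₁,…,x_l, sin x_{l+1}, cos x_{l+1},…, sin x_n, cos x_n). Let b̄_{ij} : ℝ^{l+L} → ℝ be continuous for i = 1,…,s, j = 1,…,r_i and define b_{ij}(x) = b̄_{ij}(x₁,…,x_l, sin x_{l+1}, cos x_{l+1},…, sin x_n, cos x_n), and C = ⋃_{i=1}^{s} ⋂_{j=1}^{r_i} {x : b_{ij}(x) ≥ 0}. Consider the extended system on ℝ^{l+L} with state (x̂, ŵ): dx̂_i/dt = f̄_i(x̂,ŵ) for i = 1,…,l, dŵ_{2k−1}/dt = ŵ_{2k} f̄_{l+k}(x̂,ŵ) and dŵ_{2k}/dt = −ŵ_{2k−1} f̄_{l+k}(x̂,ŵ) for k = 1,…,n−l, and define Ĉ = (⋃_{i=1}^{s} ⋂_{j=1}^{r_i} {(x̂,ŵ) : b̄_{ij}(x̂,ŵ) ≥ 0}) ∩ ⋂_{k=1}^{n−l}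 {(x̂,ŵ) : ŵ_{2k−1}² + ŵ_{2k}² = 1}. Then C is positive invariant for ẋ = f(x) if and only if Ĉ is positive invariant for the extended system. -/
/-!
Along a solution `x` of `ẋ = f̄ (trigLift x)`, the curve `trigLift ∘ x` solves the extended
system and lies on the unit circles `ŵ_{2k-1}² + ŵ_{2k}² = 1`. Conversely, a solution `z` of the
extended system starting on the circles is such a lift: integrating the angular velocities
`f̄_{l+k}(z)` gives angles `θ_k`, and `(sin θ_k, cos θ_k)` and `(ŵ_{2k-1}, ŵ_{2k})` solve the same
linear rotation equation with the same initial value, so they coincide. Hence solutions of the two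
systems correspond, and `C = trigLift⁻¹ B`, `Ĉ = B ∩ circles` for the same set `B`.
-/

/-- `D` is positive invariant for `ẋ = F(x)`: every solution defined on `[0, t]`
that starts in `D` stays in `D`. -/
def PosInvariant {E : Type*} [NormedAddCommGroup E] [NormedSpace ℝ E]
    (F : E → E) (D : Set E) : Prop :=
  ∀ (x : ℝ → E) (t : ℝ), 0 ≤ t →
    (∀ s ∈ Set.Icc 0 t, HasDerivAt x (F (x s)) s) → x 0 ∈ D → x t ∈ D

/-- The lift `x ↦ (x₁,…,x_l, sin x_{l+1}, …, cos x_n)` of the state, with the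
angular coordinates grouped as `(sines, cosines)`. -/
noncomputable def trigLift {l d : ℕ} (x : (Fin l → ℝ) × (Fin d → ℝ)) :
    (Fin l → ℝ) × (Fin d → ℝ) × (Fin d → ℝ) :=
  (x.1, fun k => Real.sin (x.2 k), fun k => Real.cos (x.2 k))

/-- The extended (polynomialized) vector field on `ℝ^{l+L}`:
`dx̂ᵢ = f̄ᵢ`, `dŵ_{2k−1} = ŵ_{2k} f̄_{l+k}`, `dŵ_{2k} = −ŵ_{2k−1} f̄_{l+k}`. -/
def extField {l d : ℕ}
    (fbar : (Fin l → ℝ) × (Fin d → ℝ) × (Fin d → ℝ) → (Fin l → ℝ) × (Fin d → ℝ)) :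
    (Fin l → ℝ) × (Fin d → ℝ) × (Fin d → ℝ) →
      (Fin l → ℝ) × (Fin d → ℝ) × (Fin d → ℝ) :=
  fun z => ((fbar z).1,
    fun k => z.2.2 k * (fbar z).2 k,
    fun k => -(z.2.1 k * (fbar z).2 k))

open Set

theorem exists_sin_cos_eq {a b : ℝ} (h : a ^ 2 + b ^ 2 = 1) :
    ∃ θ : ℝ, Real.sin θ = a ∧ Real.cos θ = b := by
  set w : ℂ := ⟨b, a⟩
  have hw : ‖w‖ = 1 := by
    rw [Complex.norm_def, Complex.normSq_mk, show b * b + a * a = 1 by linarith, Real.sqrt_one]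
  have hw0 : w ≠ 0 := norm_ne_zero_iff.1 (hw ▸ one_ne_zero)
  exact ⟨w.arg, by simp [Complex.sin_arg, hw, w], by simp [Complex.cos_arg hw0, hw, w]⟩

theorem exists_hasDerivAt_eq_of_continuousOn_Icc {E : Type*} [NormedAddCommGroup E]
    [NormedSpace ℝ E] [CompleteSpace E] {g : ℝ → E} {a b : ℝ} (hab : a ≤ b)
    (hg : ContinuousOn g (Icc a b)) (c : E) :
    ∃ F : ℝ → E, F a = c ∧ ∀ u ∈ Icc a b, HasDerivAt F (g u) u := by
  have hG : Continuous (IccExtend hab ((Icc a b).domRestrict g)) := hg.domRestrict.Icc_extend'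
  refine ⟨fun u => c + ∫ v in a..u, IccExtend hab ((Icc a b).domRestrict g) v, by simp,
    fun u hu => ?_⟩
  have := ((hG.integral_hasStrictDerivAt a u).hasDerivAt).const_add c
  rwa [IccExtend_of_mem hab _ hu] at this

theorem HasDerivAt.fst {E F : Type*} [NormedAddCommGroup E] [NormedSpace ℝ E]
    [NormedAddCommGroup F] [NormedSpace ℝ F] {x : ℝ → E × F} {v : E × F} {s : ℝ}
    (hx : HasDerivAt x v s) : HasDerivAt (fun u => (x u).1) v.1 s :=
  (ContinuousLinearMap.fst ℝ E F).hasFDerivAt.comp_hasDerivAt s hx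

theorem HasDerivAt.snd {E F : Type*} [NormedAddCommGroup E] [NormedSpace ℝ E]
    [NormedAddCommGroup F] [NormedSpace ℝ F] {x : ℝ → E × F} {v : E × F} {s : ℝ}
    (hx : HasDerivAt x v s) : HasDerivAt (fun u => (x u).2) v.2 s :=
  (ContinuousLinearMap.snd ℝ E F).hasFDerivAt.comp_hasDerivAt s hx

theorem eqOn_of_hasDerivAt_rotation {a b : ℝ} {p q p' q' ω : ℝ → ℝ}
    (hp : ∀ u ∈ Icc a b, HasDerivAt p (q u * ω u) u)
    (hq : ∀ u ∈ Icc a b, HasDerivAt q (-(p u * ω u)) u)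
    (hp' : ∀ u ∈ Icc a b, HasDerivAt p' (q' u * ω u) u)
    (hq' : ∀ u ∈ Icc a b, HasDerivAt q' (-(p' u * ω u)) u)
    (hpa : p a = p' a) (hqa : q a = q' a) :
    ∀ u ∈ Icc a b, p u = p' u ∧ q u = q' u := by
  set D : ℝ → ℝ := fun u => (p u - p' u) ^ 2 + (q u - q' u) ^ 2
  have hD : ∀ u ∈ Icc a b, HasDerivAt D 0 u := fun u hu =>
    ((((hp u hu).fun_sub (hp' u hu)).fun_pow 2).fun_add
      (((hq u hu).fun_sub (hq' u hu)).fun_pow 2)).congr_deriv (by ring)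
  have hD_const : ∀ u ∈ Icc a b, D u = D a :=
    constant_of_has_deriv_right_zero (fun u hu => (hD u hu).continuousAt.continuousWithinAt)
      fun u hu => (hD u (Ico_subset_Icc_self hu)).hasDerivWithinAt
  intro u hu
  have h := hD_const u hu
  simp only [D, hpa, hqa, sub_self] at h
  constructor <;> nlinarith [sq_nonneg (p u - p' u), sq_nonneg (q u - q' u)]

def unitCircles (l d : ℕ) : Set ((Fin l → ℝ) × (Fin d → ℝ) × (Fin d → ℝ)) :=
  ⋂ k : Fin d, {z | z.2.1 k ^ 2 + z.2.2 k ^ 2 = 1}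

section TrigLift

variable {l d : ℕ}

theorem trigLift_mem_unitCircles (x : (Fin l → ℝ) × (Fin d → ℝ)) :
    trigLift x ∈ unitCircles l d :=
  mem_iInter.2 fun k => Real.sin_sq_add_cos_sq (x.2 k)

theorem HasDerivAt.trigLift {x : ℝ → (Fin l → ℝ) × (Fin d → ℝ)}
    {v : (Fin l → ℝ) × (Fin d → ℝ)} {s : ℝ} (hx : HasDerivAt x v s) :
    HasDerivAt (fun u => trigLift (x u))
      (v.1, fun k => Real.cos ((x s).2 k) * v.2 k, fun k => -(Real.sin ((x s).2 k) * v.2 k))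
      s := by
  refine hx.fst.prodMk ((hasDerivAt_pi.2 fun k => ?_).prodMk (hasDerivAt_pi.2 fun k => ?_))
  · exact (hasDerivAt_pi.1 hx.snd k).sin
  · simpa only [neg_mul] using (hasDerivAt_pi.1 hx.snd k).cos

variable {fbar : (Fin l → ℝ) × (Fin d → ℝ) × (Fin d → ℝ) → (Fin l → ℝ) × (Fin d → ℝ)}

theorem exists_trigLift_eq_of_hasDerivAt_extField (hf : Continuous fbar)
    {z : ℝ → (Fin l → ℝ) × (Fin d → ℝ) × (Fin d → ℝ)} {t : ℝ} (ht : 0 ≤ t)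
    (hz : ∀ s ∈ Icc 0 t, HasDerivAt z (extField fbar (z s)) s) (hz0 : z 0 ∈ unitCircles l d) :
    ∃ x : ℝ → (Fin l → ℝ) × (Fin d → ℝ),
      (∀ s ∈ Icc 0 t, HasDerivAt x (fbar (trigLift (x s))) s) ∧
        ∀ s ∈ Icc 0 t, trigLift (x s) = z s := by
  choose θ₀ hsin₀ hcos₀ using fun k => exists_sin_cos_eq (mem_iInter.1 hz0 k)
  have hzc : ContinuousOn z (Icc 0 t) := fun s hs => (hz s hs).continuousAt.continuousWithinAt
  obtain ⟨θ, hθ₀, hθ⟩ := exists_hasDerivAt_eq_of_continuousOn_Icc ht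
    ((continuous_snd.comp hf).comp_continuousOn hzc) θ₀
  have hlift : ∀ s ∈ Icc 0 t, trigLift ((z s).1, θ s) = z s := by
    intro s hs
    have h k := eqOn_of_hasDerivAt_rotation (p := fun u => Real.sin (θ u k))
      (q := fun u => Real.cos (θ u k)) (p' := fun u => (z u).2.1 k) (q' := fun u => (z u).2.2 k)
      (fun u hu => (hasDerivAt_pi.1 (hθ u hu) k).sin)
      (fun u hu => by simpa only [neg_mul] using (hasDerivAt_pi.1 (hθ u hu) k).cos)
      (fun u hu => hasDerivAt_pi.1 (hz u hu).snd.fst k)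
      (fun u hu => hasDerivAt_pi.1 (hz u hu).snd.snd k)
      (by simp only [hθ₀, hsin₀]) (by simp only [hθ₀, hcos₀]) s hs
    exact Prod.ext rfl (Prod.ext (funext fun k => (h k).1) (funext fun k => (h k).2))
  refine ⟨fun s => ((z s).1, θ s), fun s hs => ?_, hlift⟩
  rw [hlift s hs]
  exact (hz s hs).fst.prodMk (hθ s hs)

theorem posInvariant_comp_trigLift_iff (hf : Continuous fbar)
    (B : Set ((Fin l → ℝ) × (Fin d → ℝ) × (Fin d → ℝ))) :
    PosInvariant (fun x => fbar (trigLift x)) (trigLift ⁻¹' B) ↔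
      PosInvariant (extField fbar) (B ∩ unitCircles l d) := by
  constructor
  · intro h z t ht hz hz0
    obtain ⟨x, hx, hlift⟩ := exists_trigLift_eq_of_hasDerivAt_extField hf ht hz hz0.2
    have hxt := h x t ht hx (by rw [mem_preimage, hlift 0 ⟨le_rfl, ht⟩]; exact hz0.1)
    rw [← hlift t ⟨ht, le_rfl⟩]
    exact ⟨hxt, trigLift_mem_unitCircles _⟩
  · intro h x t ht hx hx0
    exact (h _ t ht (fun s hs => (hx s hs).trigLift) ⟨hx0, trigLift_mem_unitCircles _⟩).1

end TrigLift

theorem trig_invariance_iff_general {l d s : ℕ} (r : Fin s → ℕ)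
    (fbar : (Fin l → ℝ) × (Fin d → ℝ) × (Fin d → ℝ) → (Fin l → ℝ) × (Fin d → ℝ))
    (hf : ContDiff ℝ 1 fbar)
    (bbar : (i : Fin s) → Fin (r i) → ((Fin l → ℝ) × (Fin d → ℝ) × (Fin d → ℝ)) → ℝ)
    (Cset : Set ((Fin l → ℝ) × (Fin d → ℝ)))
    (hC : Cset = ⋃ i : Fin s, ⋂ j : Fin (r i), {x | 0 ≤ bbar i j (trigLift x)})
    (Chat : Set ((Fin l → ℝ) × (Fin d → ℝ) × (Fin d → ℝ)))
    (hChat : Chat =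
      (⋃ i : Fin s, ⋂ j : Fin (r i), {z | 0 ≤ bbar i j z}) ∩
        (⋂ k : Fin d, {z | z.2.1 k ^ 2 + z.2.2 k ^ 2 = 1})) :
    PosInvariant (fun x => fbar (trigLift x)) Cset ↔
      PosInvariant (extField fbar) Chat := by
  have hC' : Cset = trigLift ⁻¹' ⋃ i : Fin s, ⋂ j : Fin (r i), {z | 0 ≤ bbar i j z} := by
    simp only [hC, preimage_iUnion, preimage_iInter, preimage_ofPred_eq]
  rw [hC', hChat]
  exact posInvariant_comp_trigLift_iff hf.continuous _

/-- for `f̄` continuously differentiable, `C` is positive invariant for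
`ẋ = f(x) = f̄(x₁,…,x_l, sin x_{l+1}, cos x_{l+1}, …)` iff `Ĉ` is positive invariant
for the extended system. -/
theorem trig_invariance_iff {l d s : ℕ} (hl : 1 ≤ l) (r : Fin s → ℕ)
    (fbar : (Fin l → ℝ) × (Fin d → ℝ) × (Fin d → ℝ) → (Fin l → ℝ) × (Fin d → ℝ))
    (hf : ContDiff ℝ 1 fbar)
    (bbar : (i : Fin s) → Fin (r i) → ((Fin l → ℝ) × (Fin d → ℝ) × (Fin d → ℝ)) → ℝ)
    (hb : ∀ i j, Continuous (bbar i j))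
    (Cset : Set ((Fin l → ℝ) × (Fin d → ℝ)))
    (hC : Cset = ⋃ i : Fin s, ⋂ j : Fin (r i), {x | 0 ≤ bbar i j (trigLift x)})
    (Chat : Set ((Fin l → ℝ) × (Fin d → ℝ) × (Fin d → ℝ)))
    (hChat : Chat =
      (⋃ i : Fin s, ⋂ j : Fin (r i), {z | 0 ≤ bbar i j z}) ∩
        (⋂ k : Fin d, {z | z.2.1 k ^ 2 + z.2.2 k ^ 2 = 1})) :
    PosInvariant (fun x => fbar (trigLift x)) Cset ↔
      PosInvariant (extField fbar) Chat :=
  trig_invariance_iff_general r fbar hf bbar Cset hC Chat hChat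
end

section
/- Let b : ℝⁿ → ℝ and f : ℝⁿ → ℝⁿ, g : ℝⁿ → ℝ^{n×m} be polynomial. Suppose there exist a real number ρ ≤ 0, polynomials η, θ₁,…,θ_m, and SOS polynomials α and Λ such that α(x)(∇b(x)ᵀf(x)) + Σ_{i=1}^{m} θ_i(x)[∇b(x)ᵀg(x)]_i + η(x)b(x) + ρΛ(x) − 1 is SOS. Then for every x ∈ ℝⁿ with b(x) = 0 and ∇b(x)ᵀg(x) = 0 one has ∇b(x)ᵀf(x) > 0; consequently, there is no x with b(x) = 0, ∇b(x)ᵀg(x) = 0, and ∇b(x)ᵀf(x) ≤ 0, and for every x with b(x) = 0 there exists u ∈ ℝᵐ with ∇b(x)ᵀ(f(x) + g(x)u) > 0. -/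
/-!
At a point with `b = 0` and `∇bᵀg = 0` the certificate evaluates to
`α(x) ∇bᵀf(x) + ρ Λ(x) - 1 ≥ 0`; as `α(x) ≥ 0` and `ρ Λ(x) ≤ 0`, this forces `∇bᵀf(x) > 0`.
Where instead `∇bᵀg(x) ≠ 0`, an input `u` parallel to `∇bᵀg(x)` makes `∇bᵀ(f + gu)` any value.
-/

open MvPolynomial

def IsSOS {σ : Type*} (f : MvPolynomial σ ℝ) : Prop :=
  ∃ (k : ℕ) (g : Fin k → MvPolynomial σ ℝ), f = ∑ i, g i ^ 2

lemma IsSOS.eval_nonneg {σ : Type*} {f : MvPolynomial σ ℝ} (h : IsSOS f) (x : σ → ℝ) :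
    0 ≤ eval x f := by
  obtain ⟨k, g, rfl⟩ := h
  simp only [map_sum, map_pow]
  exact Finset.sum_nonneg fun i _ => sq_nonneg _

lemma pos_of_mul_add_mul_sub_one_nonneg {a L r s : ℝ} (ha : 0 ≤ a) (hr : r ≤ 0) (hs : 0 ≤ s)
    (h : 0 ≤ a * L + r * s - 1) : 0 < L := by
  by_contra! hL
  nlinarith [mul_nonpos_of_nonneg_of_nonpos ha hL, mul_nonpos_of_nonpos_of_nonneg hr hs]

open Matrix in
lemma exists_pos_add_dotProduct {ι : Type*} [Fintype ι] (L : ℝ) (c : ι → ℝ)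
    (h : c = 0 → 0 < L) : ∃ u : ι → ℝ, 0 < L + c ⬝ᵥ u := by
  by_cases hc : c = 0
  · exact ⟨0, by simpa using h hc⟩
  -- steer along `c` so that the sum equals exactly `1`
  have hcc : c ⬝ᵥ c ≠ 0 := mt dotProduct_self_eq_zero.mp hc
  refine ⟨((1 - L) / (c ⬝ᵥ c)) • c, ?_⟩
  rw [dotProduct_smul, smul_eq_mul, div_mul_cancel₀ _ hcc]
  norm_num

open Matrix in
lemma exists_pos_sum_mul_add_sum_mul {ι κ : Type*} [Fintype ι] [Fintype κ]
    (p F : ι → ℝ) (G : ι → κ → ℝ) (h : (∀ j, ∑ i, p i * G i j = 0) → 0 < ∑ i, p i * F i) :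
    ∃ u : κ → ℝ, 0 < ∑ i, p i * (F i + ∑ j, G i j * u j) := by
  obtain ⟨u, hu⟩ := exists_pos_add_dotProduct (p ⬝ᵥ F) (p ᵥ* Matrix.of G)
    fun hc => h fun j => congrFun hc j
  refine ⟨u, ?_⟩
  rwa [← dotProduct_mulVec, ← dotProduct_add] at hu

/-- soundness of the alternating-descent SOS certificate. If `ρ ≤ 0` and
`α (∇bᵀf) + Σ θᵢ (∇bᵀg)ᵢ + η b + ρΛ − 1` is SOS with `α, Λ` SOS, then wherever
`b = 0` and `∇bᵀg = 0` one has `∇bᵀf > 0`; consequently no point satisfies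
`b = 0`, `∇bᵀg = 0`, `∇bᵀf ≤ 0`, and at every point of `{b = 0}` some input `u`
makes `∇bᵀ(f + gu) > 0`. -/
theorem alternating_descent_certificate {n m : ℕ}
    (b : MvPolynomial (Fin n) ℝ)
    (f : Fin n → MvPolynomial (Fin n) ℝ)
    (g : Fin n → Fin m → MvPolynomial (Fin n) ℝ)
    (ρ : ℝ) (hρ : ρ ≤ 0)
    (η : MvPolynomial (Fin n) ℝ) (θ : Fin m → MvPolynomial (Fin n) ℝ)
    (α Λ : MvPolynomial (Fin n) ℝ) (hα : IsSOS α) (hΛ : IsSOS Λ)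
    (hcert : IsSOS (α * (∑ k, pderiv k b * f k)
      + (∑ i : Fin m, θ i * ∑ k, pderiv k b * g k i)
      + η * b + MvPolynomial.C ρ * Λ - 1)) :
    (∀ x : Fin n → ℝ, eval x b = 0 →
      (∀ i : Fin m, ∑ k, eval x (pderiv k b) * eval x (g k i) = 0) →
      0 < ∑ k, eval x (pderiv k b) * eval x (f k)) ∧
    (¬ ∃ x : Fin n → ℝ, eval x b = 0 ∧
      (∀ i : Fin m, ∑ k, eval x (pderiv k b) * eval x (g k i) = 0) ∧
      ∑ k, eval x (pderiv k b) * eval x (f k) ≤ 0) ∧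
    (∀ x : Fin n → ℝ, eval x b = 0 → ∃ u : Fin m → ℝ,
      0 < ∑ k, eval x (pderiv k b) * (eval x (f k) + ∑ j, eval x (g k j) * u j)) := by
  have descent : ∀ x : Fin n → ℝ, eval x b = 0 →
      (∀ i : Fin m, ∑ k, eval x (pderiv k b) * eval x (g k i) = 0) →
      0 < ∑ k, eval x (pderiv k b) * eval x (f k) := by
    intro x hb hg
    have hx := hcert.eval_nonneg x
    simp only [map_sub, map_add, map_mul, map_sum, map_one, eval_C, hb, hg, mul_zero,
      Finset.sum_const_zero, add_zero] at hx
    exact pos_of_mul_add_mul_sub_one_nonneg (hα.eval_nonneg x) hρ (hΛ.eval_nonneg x) hx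
  refine ⟨descent, fun ⟨x, hb, hg, hf⟩ => (descent x hb hg).not_ge hf, fun x hb => ?_⟩
  exact exists_pos_sum_mul_add_sum_mul (fun k => eval x (pderiv k b)) (fun k => eval x (f k))
    (fun k j => eval x (g k j)) (descent x hb)
end

section
/- Let f : ℝⁿ → ℝⁿ and g : ℝⁿ → ℝ^{n×m} be continuously differentiable, and let (x*, u*) be a fixed point: f(x*) + g(x*)u* = 0. Let F ∈ ℝ^{n×n} be the Jacobian of x ↦ f(x) + g(x)u* at x* and G = g(x*). Suppose there exist K ∈ ℝ^{m×n} and symmetric positive definite matrices P, N ∈ ℝ^{n×n} with (F − GK)ᵀP + P(F − GK) = −N. Then there exists ε > 0 such that, setting b(x) = ε − (x − x*)ᵀP(x − x*) and ũ(x) = u* − K(x − x*), one has ∇b(x)ᵀ(f(x) + g(x)ũ(x)) > 0 for every x ≠ x* with b(x) ≥ 0; in particular ∇b(x) ≠ 0 whenever b(x) = 0, and for every x with b(x) ≥ 0 there exists u ∈ ℝᵐ with ∇b(x)ᵀ(f(x) + g(x)u) ≥ 0. -/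
/-!
With `v = x − x*`, the closed-loop field `h(x) = f(x) + g(x)(u* − Kv)` is `Av + o(‖v‖)` with
`A = F − GK`, because `h(x*) = 0`, `x ↦ f(x) + g(x)u*` has derivative `F` and `g` is continuous.
The Lyapunov equation gives `2 (Pv)ᵀAv = −vᵀNv ≤ −c‖v‖²`, which dominates the `o(‖v‖²)`
remainder, so `∇b(x)ᵀh(x) = −2 (Pv)ᵀh(x) > 0` on a punctured ball around `x*`. Since `P` is
positive definite, `{b ≥ 0}` is an ellipsoid that lies in that ball once `ε` is small. The
remaining claims hold because `∇b` vanishes only at `x*`, where `b = ε > 0`.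
-/
open Matrix

/-- The quadratic barrier candidate `b(x) = ε − (x − x*)ᵀ P (x − x*)`. -/
def quadB {n : ℕ} (P : Matrix (Fin n) (Fin n) ℝ) (xs : Fin n → ℝ) (ε : ℝ)
    (x : Fin n → ℝ) : ℝ :=
  ε - ∑ i, ∑ j, (x i - xs i) * P i j * (x j - xs j)

/-- The gradient `∇b(x) = −2P(x − x*)` of the quadratic barrier. -/
def quadGrad {n : ℕ} (P : Matrix (Fin n) (Fin n) ℝ) (xs : Fin n → ℝ)
    (x : Fin n → ℝ) : Fin n → ℝ :=
  fun i => -2 * ∑ j, P i j * (x j - xs j)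

open Asymptotics Filter Topology

section
variable {ι : Type*} [Fintype ι]

theorem Asymptotics.IsBigO.dotProduct_isLittleO {α : Type*} {l : Filter α} {u w : α → ι → ℝ}
    {k₁ k₂ : α → ℝ} (hu : u =O[l] k₁) (hw : w =o[l] k₂) :
    (fun a => u a ⬝ᵥ w a) =o[l] fun a => k₁ a * k₂ a :=
  IsLittleO.fun_sum fun i _ => (isBigO_pi.1 hu i).mul_isLittleO (isLittleO_pi.1 hw i)

theorem Matrix.PosDef.exists_pos_mul_sq_norm_le {M : Matrix ι ι ℝ} (hM : M.PosDef) :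
    ∃ c, 0 < c ∧ ∀ v, c * ‖v‖ ^ 2 ≤ v ⬝ᵥ M *ᵥ v := by
  have hcont : Continuous fun v : ι → ℝ => v ⬝ᵥ M *ᵥ v := by fun_prop
  obtain ⟨c, hc, hcS⟩ := (isCompact_sphere (0 : ι → ℝ) 1).exists_forall_le' hcont.continuousOn
    fun u hu => by simpa using hM.dotProduct_mulVec_pos (ne_zero_of_mem_unit_sphere ⟨u, hu⟩)
  refine ⟨c, hc, fun v => ?_⟩
  rcases eq_or_ne v 0 with rfl | hv
  · simp
  have hnv : 0 < ‖v‖ := norm_pos_iff.2 hv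
  have hunit := hcS (‖v‖⁻¹ • v) (by simp [norm_smul, hnv.ne'])
  rw [mulVec_smul, dotProduct_smul, smul_dotProduct, smul_eq_mul, smul_eq_mul] at hunit
  calc c * ‖v‖ ^ 2 ≤ ‖v‖⁻¹ * (‖v‖⁻¹ * (v ⬝ᵥ M *ᵥ v)) * ‖v‖ ^ 2 := by gcongr
    _ = v ⬝ᵥ M *ᵥ v := by field_simp

theorem Matrix.two_mul_dotProduct_mulVec_of_lyapunov {P N A : Matrix ι ι ℝ} (hP : P.IsSymm)
    (hA : Aᵀ * P + P * A = -N) (v : ι → ℝ) :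
    2 * (P *ᵥ v ⬝ᵥ A *ᵥ v) = -(v ⬝ᵥ N *ᵥ v) := by
  have hvP : v ᵥ* P = P *ᵥ v := by rw [← vecMul_transpose, hP.eq]
  rw [← dotProduct_neg, ← neg_mulVec, ← hA, add_mulVec, dotProduct_add, ← mulVec_mulVec,
    ← mulVec_mulVec, dotProduct_mulVec v Aᵀ, dotProduct_mulVec v P, vecMul_transpose, hvP,
    dotProduct_comm (A *ᵥ v)]
  ring

theorem eventually_dotProduct_mulVec_neg_of_lyapunov {h : (ι → ℝ) → ι → ℝ} {x₀ : ι → ℝ}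
    {A P N : Matrix ι ι ℝ} (hP : P.IsSymm) (hN : N.PosDef) (hA : Aᵀ * P + P * A = -N)
    (hh : (fun x => h x - A *ᵥ (x - x₀)) =o[𝓝 x₀] fun x => x - x₀) :
    ∀ᶠ x in 𝓝 x₀, x ≠ x₀ → P *ᵥ (x - x₀) ⬝ᵥ h x < 0 := by
  obtain ⟨c, hc, hNc⟩ := hN.exists_pos_mul_sq_norm_le
  have hPv : (fun x => P *ᵥ (x - x₀)) =O[𝓝 x₀] fun x => ‖x - x₀‖ :=
    ((mulVecLin P).toContinuousLinearMap.isBigO_comp _ _).norm_right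
  have hrem := (hPv.dotProduct_isLittleO hh.norm_right).def (by positivity : 0 < c / 4)
  filter_upwards [hrem] with x hx hne
  have hv : 0 < ‖x - x₀‖ := norm_pos_iff.2 (sub_ne_zero.2 hne)
  have hsplit : P *ᵥ (x - x₀) ⬝ᵥ h x
      = P *ᵥ (x - x₀) ⬝ᵥ A *ᵥ (x - x₀) + P *ᵥ (x - x₀) ⬝ᵥ (h x - A *ᵥ (x - x₀)) := by
    rw [← dotProduct_add, add_sub_cancel]
  rw [Real.norm_eq_abs, Real.norm_eq_abs, abs_mul, abs_norm] at hx
  nlinarith [two_mul_dotProduct_mulVec_of_lyapunov hP hA (x - x₀), hNc (x - x₀),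
    le_abs_self (P *ᵥ (x - x₀) ⬝ᵥ (h x - A *ᵥ (x - x₀))), mul_pos hc (mul_pos hv hv)]

theorem isLittleO_mulVec_sub_mulVec {E κ : Type*} [NormedAddCommGroup E] [Fintype κ]
    {M : E → Matrix κ ι ℝ} {φ : E → ι → ℝ} {x₀ : E} (hM : ContinuousAt M x₀)
    (hφ : φ =O[𝓝 x₀] fun x => x - x₀) :
    (fun x => M x *ᵥ φ x - M x₀ *ᵥ φ x) =o[𝓝 x₀] fun x => x - x₀ := by
  refine isLittleO_pi.2 fun i => ?_
  have hrow : (fun x => M x i - M x₀ i) =o[𝓝 x₀] fun _ => (1 : ℝ) :=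
    (isLittleO_one_iff ℝ).2 <| by
      simpa using (tendsto_pi_nhds.1 hM i).sub_const (M x₀ i)
  have := hφ.norm_right.dotProduct_isLittleO hrow
  simp only [mul_one, isLittleO_norm_right] at this
  refine this.congr_left fun x => ?_
  rw [dotProduct_comm, sub_dotProduct]
  rfl

theorem isLittleO_feedback_sub_linearization {κ : Type*} [Fintype κ] {f : (ι → ℝ) → ι → ℝ}
    {g : (ι → ℝ) → Matrix ι κ ℝ} {x₀ : ι → ℝ} {u₀ : κ → ℝ} {F : Matrix ι ι ℝ}
    {K : Matrix κ ι ℝ} (hg : ContinuousAt g x₀) (hfix : f x₀ + g x₀ *ᵥ u₀ = 0)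
    (hF : HasFDerivAt (fun x => f x + g x *ᵥ u₀) (mulVecLin F).toContinuousLinearMap x₀) :
    (fun x => f x + g x *ᵥ (u₀ - K *ᵥ (x - x₀)) - (F - g x₀ * K) *ᵥ (x - x₀))
      =o[𝓝 x₀] fun x => x - x₀ := by
  have hlin := hF.isLittleO
  have hK := isLittleO_mulVec_sub_mulVec hg
    ((mulVecLin K).toContinuousLinearMap.isBigO_comp (fun x => x - x₀) _)
  refine (hlin.sub hK).congr_left fun x => ?_
  simp only [hfix, LinearMap.coe_toContinuousLinearMap', mulVecLin_apply, mulVec_sub, sub_mulVec,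
    ← mulVec_mulVec]
  abel

end

section
variable {n : ℕ} (P : Matrix (Fin n) (Fin n) ℝ) (xs x : Fin n → ℝ)

theorem quadB_eq (ε : ℝ) : quadB P xs ε x = ε - (x - xs) ⬝ᵥ P *ᵥ (x - xs) := by
  simp only [quadB, dotProduct, mulVec, Pi.sub_apply, Finset.mul_sum, mul_assoc]

theorem quadGrad_eq : quadGrad P xs x = (-2 : ℝ) • P *ᵥ (x - xs) := rfl

theorem quadGrad_dotProduct (y : Fin n → ℝ) :
    quadGrad P xs x ⬝ᵥ y = -2 * (P *ᵥ (x - xs) ⬝ᵥ y) := by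
  rw [quadGrad_eq, smul_dotProduct, smul_eq_mul]

theorem norm_sub_le_of_quadB_nonneg {c ρ : ℝ} (hc : 0 < c) (hρ : 0 ≤ ρ)
    (hPc : ∀ v, c * ‖v‖ ^ 2 ≤ v ⬝ᵥ P *ᵥ v) (hb : 0 ≤ quadB P xs (c * ρ ^ 2) x) :
    ‖x - xs‖ ≤ ρ := by
  rw [quadB_eq] at hb
  have hsq : ‖x - xs‖ ^ 2 ≤ ρ ^ 2 := le_of_mul_le_mul_left (by linarith [hPc (x - xs)]) hc
  exact (pow_le_pow_iff_left₀ (norm_nonneg _) hρ two_ne_zero).1 hsq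

end

theorem local_cbf_at_equilibrium_general {n m : ℕ}
    (f : (Fin n → ℝ) → (Fin n → ℝ))
    (g : (Fin n → ℝ) → Fin n → Fin m → ℝ)
    (hg : ContDiff ℝ 1 g)
    (xs : Fin n → ℝ) (us : Fin m → ℝ)
    (hfix : (fun i => f xs i + ∑ j, g xs i j * us j) = 0)
    (F : Matrix (Fin n) (Fin n) ℝ)
    (hF : HasFDerivAt (fun x : Fin n → ℝ => (fun i => f x i + ∑ j, g x i j * us j))
      (LinearMap.toContinuousLinearMap (Matrix.mulVecLin F)) xs)
    (K : Matrix (Fin m) (Fin n) ℝ) (P N : Matrix (Fin n) (Fin n) ℝ)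
    (hP : P.PosDef) (hN : N.PosDef)
    (hlyap : (F - Matrix.of (g xs) * K)ᵀ * P + P * (F - Matrix.of (g xs) * K) = -N) :
    ∃ ε : ℝ, 0 < ε ∧
      (∀ x : Fin n → ℝ, x ≠ xs → 0 ≤ quadB P xs ε x →
        0 < ∑ i, quadGrad P xs x i *
          (f x i + ∑ j, g x i j * (us j - ∑ k, K j k * (x k - xs k)))) ∧
      (∀ x : Fin n → ℝ, quadB P xs ε x = 0 → quadGrad P xs x ≠ 0) ∧
      (∀ x : Fin n → ℝ, 0 ≤ quadB P xs ε x → ∃ u : Fin m → ℝ,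
        0 ≤ ∑ i, quadGrad P xs x i * (f x i + ∑ j, g x i j * u j)) := by
  have hclosed := isLittleO_feedback_sub_linearization (g := fun x => of (g x)) (K := K)
    hg.continuous.continuousAt hfix hF
  obtain ⟨δ, hδ, hdecrease⟩ := Metric.eventually_nhds_iff.1 <|
    eventually_dotProduct_mulVec_neg_of_lyapunov (isHermitian_iff_isSymm.1 hP.isHermitian) hN
      hlyap hclosed
  obtain ⟨c, hc, hPc⟩ := hP.exists_pos_mul_sq_norm_le
  have hpos : ∀ x, x ≠ xs → 0 ≤ quadB P xs (c * (δ / 2) ^ 2) x →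
      0 < ∑ i, quadGrad P xs x i *
        (f x i + ∑ j, g x i j * (us j - ∑ k, K j k * (x k - xs k))) := by
    intro x hx hb
    have hnear : dist x xs < δ := by
      rw [dist_eq_norm]
      linarith [norm_sub_le_of_quadB_nonneg P xs x hc (by positivity) hPc hb]
    change 0 < quadGrad P xs x ⬝ᵥ (f x + of (g x) *ᵥ (us - K *ᵥ (x - xs)))
    linarith [quadGrad_dotProduct P xs x (f x + of (g x) *ᵥ (us - K *ᵥ (x - xs))),
      hdecrease hnear hx]
  refine ⟨c * (δ / 2) ^ 2, by positivity, hpos, fun x hb hgrad => ?_, fun x hb => ?_⟩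
  · have hPv : P *ᵥ (x - xs) = 0 := by
      rw [quadGrad_eq] at hgrad
      exact (smul_eq_zero.1 hgrad).resolve_left (by norm_num)
    rw [quadB_eq, hPv, dotProduct_zero, sub_zero] at hb
    exact (by positivity : (0 : ℝ) < c * (δ / 2) ^ 2).ne' hb
  · by_cases hx : x = xs
    · exact ⟨us, by simp [hx, quadGrad]⟩
    · exact ⟨_, (hpos x hx hb).le⟩

/-- near a stabilizable fixed point `(x*, u*)`, the quadratic function
`b(x) = ε − (x−x*)ᵀP(x−x*)` obtained from the Lyapunov equation is a local CBF. -/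
theorem local_cbf_at_equilibrium {n m : ℕ}
    (f : (Fin n → ℝ) → (Fin n → ℝ))
    (g : (Fin n → ℝ) → Fin n → Fin m → ℝ)
    (hf : ContDiff ℝ 1 f) (hg : ContDiff ℝ 1 g)
    (xs : Fin n → ℝ) (us : Fin m → ℝ)
    (hfix : (fun i => f xs i + ∑ j, g xs i j * us j) = 0)
    (F : Matrix (Fin n) (Fin n) ℝ)
    (hF : HasFDerivAt (fun x : Fin n → ℝ => (fun i => f x i + ∑ j, g x i j * us j))
      (LinearMap.toContinuousLinearMap (Matrix.mulVecLin F)) xs)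
    (K : Matrix (Fin m) (Fin n) ℝ) (P N : Matrix (Fin n) (Fin n) ℝ)
    (hP : P.PosDef) (hN : N.PosDef)
    (hlyap : (F - Matrix.of (g xs) * K)ᵀ * P + P * (F - Matrix.of (g xs) * K) = -N) :
    ∃ ε : ℝ, 0 < ε ∧
      (∀ x : Fin n → ℝ, x ≠ xs → 0 ≤ quadB P xs ε x →
        0 < ∑ i, quadGrad P xs x i *
          (f x i + ∑ j, g x i j * (us j - ∑ k, K j k * (x k - xs k)))) ∧
      (∀ x : Fin n → ℝ, quadB P xs ε x = 0 → quadGrad P xs x ≠ 0) ∧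
      (∀ x : Fin n → ℝ, 0 ≤ quadB P xs ε x → ∃ u : Fin m → ℝ,
        0 ≤ ∑ i, quadGrad P xs x i * (f x i + ∑ j, g x i j * u j)) :=
  local_cbf_at_equilibrium_general f g hg xs us hfix F hF K P N hP hN hlyap
end
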